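/- arXiv:2311.17387 — 6 statements merged into one kernel-verified Lean document; each statement's English description precedes it below -/
import Mathlib

section
/- Let h be a nonzero polynomial in ℤ[t] and let a ≥ 1 be an integer. Then δ(h·(1 + t + ⋯ + t^{a−1})) = a·δ(h). -/
/-!
Since `δ(p) = 2 p'(1) - (deg p) p(1)` and degrees add over `ℤ`, the Leibniz rule gives
`δ(pq) = δ(p) q(1) + p(1) δ(q)`. For `g = 1 + t + ⋯ + t^(a-1)` we have `g(1) = a` and, by Gauss's
sum, `δ(g) = 2 (0 + 1 + ⋯ + (a-1)) - (a-1) a = 0`.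
-/

open Polynomial

/-- `δ(p) = ∑_{i=0}^{s} (2i - s) p_i` where `s = deg p`. -/
noncomputable def polyDelta (p : Polynomial ℤ) : ℤ :=
  ∑ i ∈ Finset.range (p.natDegree + 1), (2 * (i : ℤ) - (p.natDegree : ℤ)) * p.coeff i

lemma derivative_eval_one_eq_sum_range {R : Type*} [CommSemiring R] (p : R[X]) :
    p.derivative.eval 1 = ∑ i ∈ Finset.range (p.natDegree + 1), p.coeff i * i := by
  rw [derivative_eval, sum_over_range _ fun n => by simp]
  simp

lemma polyDelta_eq_two_mul_derivative_eval_one_sub (p : ℤ[X]) :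
    polyDelta p = 2 * p.derivative.eval 1 - p.natDegree * p.eval 1 := by
  rw [derivative_eval_one_eq_sum_range, eval_eq_sum_range, polyDelta, Finset.mul_sum,
    Finset.mul_sum, ← Finset.sum_sub_distrib]
  refine Finset.sum_congr rfl fun i _ => ?_
  simp only [one_pow, mul_one]
  ring

lemma polyDelta_mul (p q : ℤ[X]) :
    polyDelta (p * q) = polyDelta p * q.eval 1 + p.eval 1 * polyDelta q := by
  rcases eq_or_ne p 0 with rfl | hp
  · simp [polyDelta]
  rcases eq_or_ne q 0 with rfl | hq
  · simp [polyDelta]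
  simp only [polyDelta_eq_two_mul_derivative_eval_one_sub, natDegree_mul hp hq, derivative_mul, eval_add, eval_mul]
  push_cast
  ring

lemma natDegree_geom_sum_X {R : Type*} [Semiring R] [Nontrivial R] (a : ℕ) :
    (∑ i ∈ Finset.range a, (X : R[X]) ^ i).natDegree = a - 1 := by
  rcases Nat.eq_zero_or_pos a with rfl | ha
  · simp
  refine natDegree_eq_of_le_of_coeff_ne_zero
    (natDegree_sum_le_of_forall_le _ _ fun i hi => ?_) ?_
  · rw [natDegree_X_pow]
    have := Finset.mem_range.1 hi
    omega
  · simp [coeff_X_pow, ha]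

lemma polyDelta_geom_sum_X (a : ℕ) : polyDelta (∑ i ∈ Finset.range a, (X : ℤ[X]) ^ i) = 0 := by
  have gauss : ((∑ i ∈ Finset.range a, i : ℕ) : ℤ) * 2 = a * (a - 1 : ℕ) := by
    exact_mod_cast Finset.sum_range_id_mul_two a
  rw [polyDelta_eq_two_mul_derivative_eval_one_sub, natDegree_geom_sum_X]
  simp only [derivative_sum, derivative_X_pow, eval_finsetSum, eval_mul, eval_C, eval_pow,
    eval_X, one_pow, mul_one, Finset.sum_const, Finset.card_range, nsmul_eq_mul]
  push_cast at gauss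
  linear_combination gauss

theorem delta_mul_geom_general (h : Polynomial ℤ) (a : ℕ) :
    polyDelta (h * ∑ i ∈ Finset.range a, (X : Polynomial ℤ) ^ i) = (a : ℤ) * polyDelta h := by
  rw [polyDelta_mul, polyDelta_geom_sum_X]
  simp [eval_finsetSum, mul_comm]

theorem delta_mul_geom (h : Polynomial ℤ) (hh : h ≠ 0) (a : ℕ) (ha : 1 ≤ a) :
    polyDelta (h * ∑ i ∈ Finset.range a, (X : Polynomial ℤ) ^ i) = (a : ℤ) * polyDelta h :=
  delta_mul_geom_general h a
end

section
/- Let G₁ and G₂ be finite simple graphs on disjoint vertex sets V₁ and V₂, and let G = G₁ + G₂ be their join. Let ρᵢ : 𝕜[x_S : S a stable set of Gᵢ] → 𝕜[x_S : S a stable set of G] (i = 1, 2) be the 𝕜-algebra maps induced by regarding each stable set of Gᵢ as a stable set of G. Then the toric ideal of the stable set ring of G splits as J_G = ρ₁(J_{G₁}) + ρ₂(J_{G₂}), i.e. J_G equals the ideal generated by the images of J_{G₁} and J_{G₂}. -/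
open MvPolynomial

/-- The join `G₁ + G₂` of two graphs on disjoint vertex sets: keep all edges of
`G₁` and `G₂` and connect every vertex of `G₁` to every vertex of `G₂`. -/
def graphJoin {V₁ V₂ : Type*} (G₁ : SimpleGraph V₁) (G₂ : SimpleGraph V₂) :
    SimpleGraph (V₁ ⊕ V₂) where
  Adj x y :=
    match x, y with
    | Sum.inl a, Sum.inl b => G₁.Adj a b
    | Sum.inr a, Sum.inr b => G₂.Adj a b
    | _, _ => True
  symm := ⟨by rintro (a | a) (b | b) h <;> simp_all [SimpleGraph.adj_comm]⟩
  loopless := ⟨by rintro (a | a) h <;> exact SimpleGraph.irrefl _ h⟩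

/-- `S` is a stable (independent) set of `G`. -/
def IsStableSet {V : Type*} (G : SimpleGraph V) (S : Finset V) : Prop :=
  ∀ v ∈ S, ∀ w ∈ S, ¬ G.Adj v w

/-- The index type of the variables of the stable set ring: the stable sets of `G`. -/
def StabIdx {V : Type*} (G : SimpleGraph V) : Type _ := {S : Finset V // IsStableSet G S}

/-- The defining map `ψ_G` of the stable set ring, sending `x_S` to `(∏_{v ∈ S} t_v) t_∞`
(the extra variable `t_∞` is indexed by `none`). -/
noncomputable def stabRingMap (𝕜 : Type*) [Field 𝕜] {V : Type*} (G : SimpleGraph V) :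
    MvPolynomial (StabIdx G) 𝕜 →ₐ[𝕜] MvPolynomial (Option V) 𝕜 :=
  aeval (fun S : StabIdx G => (∏ v ∈ S.1, X (some v)) * X (none : Option V))

/-- The toric ideal `J_G` of the stable set ring of `G`. -/
noncomputable def stabToricIdeal (𝕜 : Type*) [Field 𝕜] {V : Type*} (G : SimpleGraph V) :
    Ideal (MvPolynomial (StabIdx G) 𝕜) :=
  RingHom.ker (stabRingMap 𝕜 G).toRingHom

/-- A stable set of `G₁` is a stable set of the join `G₁ + G₂`. -/
def stabInclLeft {V₁ V₂ : Type*} (G₁ : SimpleGraph V₁) (G₂ : SimpleGraph V₂) :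
    StabIdx G₁ → StabIdx (graphJoin G₁ G₂) := fun S =>
  ⟨S.1.map ⟨Sum.inl, Sum.inl_injective⟩, by
    intro v hv w hw
    simp only [Finset.mem_map, Function.Embedding.coeFn_mk] at hv hw
    obtain ⟨a, ha, rfl⟩ := hv
    obtain ⟨b, hb, rfl⟩ := hw
    exact S.2 a ha b hb⟩

/-- A stable set of `G₂` is a stable set of the join `G₁ + G₂`. -/
def stabInclRight {V₁ V₂ : Type*} (G₁ : SimpleGraph V₁) (G₂ : SimpleGraph V₂) :
    StabIdx G₂ → StabIdx (graphJoin G₁ G₂) := fun S =>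
  ⟨S.1.map ⟨Sum.inr, Sum.inr_injective⟩, by
    intro v hv w hw
    simp only [Finset.mem_map, Function.Embedding.coeFn_mk] at hv hw
    obtain ⟨a, ha, rfl⟩ := hv
    obtain ⟨b, hb, rfl⟩ := hw
    exact S.2 a ha b hb⟩

/-!
`J_G` is spanned by the binomials `x^d - x^d'` with `ψ_G(x^d) = ψ_G(x^d')`, since `ψ_G` sends
monomials to monomials. A stable set of `G₁ + G₂` lies in `V₁` or in `V₂`, so every monomial of
the join factors as `ρ₁(x^a) ρ₂(x^b)`. Reading the exponent of `ψ(ρ₁(x^a) ρ₂(x^b))` on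
`V₁ ∪ {∞}` and on `V₂ ∪ {∞}` shows, with `k = deg b' - deg b = deg a - deg a'`, that
`x^a - x^a' x_∅^k ∈ J_{G₁}` and `x^b x_∅^k - x^b' ∈ J_{G₂}`. As `x_∅` lies in the image of both
`ρ₁` and `ρ₂`, the binomial is
`ρ₁(x^a - x^a' x_∅^k) ρ₂(x^b) + ρ₁(x^a') ρ₂(x^b x_∅^k - x^b')`.
-/

namespace MvPolynomial

variable {R σ τ : Type*}

theorem aeval_monomial_eq_monomial_linearCombination [CommSemiring R] (w : σ → τ →₀ ℕ)
    (d : σ →₀ ℕ) (c : R) :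
    aeval (fun i => monomial (w i) (1 : R)) (monomial d c) =
      monomial (Finsupp.linearCombination ℕ w d) c := by
  rw [aeval_monomial, algebraMap_eq, Finsupp.linearCombination_apply, ← mul_one c,
    ← C_mul_monomial, monomial_finsupp_sum_index]
  simp [monomial_pow]

theorem ker_le_of_binomial_mem [CommRing R] (φ : MvPolynomial σ R →ₐ[R] MvPolynomial τ R)
    (E : (σ →₀ ℕ) → τ →₀ ℕ) (hφ : ∀ d c, φ (monomial d c) = monomial (E d) c)
    {I : Ideal (MvPolynomial σ R)}
    (hI : ∀ d d', E d = E d' → monomial d 1 - monomial d' 1 ∈ I) :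
    RingHom.ker φ ≤ I := by
  -- Moving every exponent to a chosen representative of its fibre under `E` changes a
  -- polynomial only modulo `I`, and it factors through `φ`, so it kills `ker φ`.
  let D := AddMonoidAlgebra.mapDomainLinearMap R R (Function.invFun E ∘ E)
  have hφD : φ.toLinearMap = AddMonoidAlgebra.mapDomainLinearMap R R E := by
    refine linearMap_ext fun d => LinearMap.ext_ring ?_
    simp only [LinearMap.comp_apply, AlgHom.toLinearMap_apply, hφ]
    exact (AddMonoidAlgebra.mapDomainLinearMap_single E 1 d).symm
  have hD : ∀ p, p - D p ∈ I := by
    intro p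
    induction p using MvPolynomial.induction_on' with
    | monomial d c =>
      rw [show D (monomial d c) = monomial (Function.invFun E (E d)) c by
        simp [D, ← single_eq_monomial], ← mul_one c, ← smul_eq_mul, ← smul_monomial,
        ← smul_monomial, ← smul_sub]
      exact Submodule.smul_of_tower_mem I c (hI _ _ (Function.invFun_eq ⟨d, rfl⟩).symm)
    | add p q hp hq => simpa [add_sub_add_comm] using I.add_mem hp hq
  intro f hf
  have hDf : D f = 0 := by
    simp only [D, AddMonoidAlgebra.mapDomainLinearMap_comp, LinearMap.comp_apply, ← hφD,
      AlgHom.toLinearMap_apply, RingHom.mem_ker.mp hf, map_zero]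
  simpa [hDf] using hD f

end MvPolynomial

namespace Finsupp

variable {α β M : Type*} [AddCommMonoid M]

theorem mapDomain_inl_add_mapDomain_inr_apply_map_inl (x : Option α →₀ M) (y : Option β →₀ M)
    (o : Option α) :
    (x.mapDomain (Option.map Sum.inl) + y.mapDomain (Option.map Sum.inr) : Option (α ⊕ β) →₀ M)
      (o.map Sum.inl) = (x + single none (y none) : Option α →₀ M) o := by
  rw [add_apply, mapDomain_apply (Option.map_injective Sum.inl_injective)]
  cases o with
  | none =>
    simpa using congrArg (x none + ·)
      (mapDomain_apply (Option.map_injective Sum.inr_injective) y none)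
  | some v => simp [mapDomain_of_notMem_range]

theorem mapDomain_inl_add_mapDomain_inr_apply_map_inr (x : Option α →₀ M) (y : Option β →₀ M)
    (o : Option β) :
    (x.mapDomain (Option.map Sum.inl) + y.mapDomain (Option.map Sum.inr) : Option (α ⊕ β) →₀ M)
      (o.map Sum.inr) = (single none (x none) + y : Option β →₀ M) o := by
  rw [add_apply, mapDomain_apply (Option.map_injective Sum.inr_injective)]
  cases o with
  | none =>
    simpa using congrArg (· + y none)
      (mapDomain_apply (Option.map_injective Sum.inl_injective) x none)
  | some v => simp [mapDomain_of_notMem_range]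

end Finsupp

section StableSetRing

variable {𝕜 : Type*} [Field 𝕜] {V : Type*} (G : SimpleGraph V)

def StabIdx.empty : StabIdx G := ⟨∅, by simp [IsStableSet]⟩

noncomputable def stabWeight (S : Finset V) : Option V →₀ ℕ :=
  Finsupp.single none 1 + ∑ v ∈ S, Finsupp.single (some v) 1

noncomputable def stabExponent : (StabIdx G →₀ ℕ) →ₗ[ℕ] Option V →₀ ℕ :=
  Finsupp.linearCombination ℕ fun S => stabWeight S.1

variable {G}

theorem stabRingMap_monomial (d : StabIdx G →₀ ℕ) (c : 𝕜) :
    stabRingMap 𝕜 G (monomial d c) = monomial (stabExponent G d) c := by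
  have hX : (fun S : StabIdx G => (∏ v ∈ S.1, X (some v)) * X none) =
      fun S => monomial (stabWeight S.1) (1 : 𝕜) := by
    ext1 S
    rw [stabWeight, add_comm, ← one_mul (1 : 𝕜), ← monomial_mul, monomial_sum_one]
    rfl
  rw [stabRingMap, hX, aeval_monomial_eq_monomial_linearCombination, stabExponent]

theorem stabExponent_apply_none (d : StabIdx G →₀ ℕ) : stabExponent G d none = d.degree := by
  induction d using Finsupp.induction_linear with
  | zero => simp
  | add d₁ d₂ h₁ h₂ => simp [h₁, h₂]
  | single S k => simp [stabExponent, stabWeight]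

theorem stabExponent_single_empty (n : ℕ) :
    stabExponent G (Finsupp.single (StabIdx.empty G) n) = Finsupp.single none n := by
  rw [stabExponent, Finsupp.linearCombination_single]
  simp [StabIdx.empty, stabWeight]

theorem monomial_sub_monomial_mem_stabToricIdeal {d d' : StabIdx G →₀ ℕ}
    (h : stabExponent G d = stabExponent G d') :
    monomial d 1 - monomial d' 1 ∈ stabToricIdeal 𝕜 G := by
  simp [stabToricIdeal, RingHom.mem_ker, stabRingMap_monomial, h]

end StableSetRing

section Join

variable {𝕜 : Type*} [Field 𝕜] {V₁ V₂ : Type*} (G₁ : SimpleGraph V₁) (G₂ : SimpleGraph V₂)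

local notation "ρ₁" => (rename (stabInclLeft G₁ G₂) : MvPolynomial (StabIdx G₁) 𝕜 →ₐ[𝕜] _)
local notation "ρ₂" => (rename (stabInclRight G₁ G₂) : MvPolynomial (StabIdx G₂) 𝕜 →ₐ[𝕜] _)

theorem stabInclLeft_empty_eq_stabInclRight_empty :
    stabInclLeft G₁ G₂ (StabIdx.empty G₁) = stabInclRight G₁ G₂ (StabIdx.empty G₂) :=
  rfl

theorem exists_stabInclLeft_eq_or_exists_stabInclRight_eq (S : StabIdx (graphJoin G₁ G₂)) :
    (∃ T, stabInclLeft G₁ G₂ T = S) ∨ ∃ T, stabInclRight G₁ G₂ T = S := by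
  have hS := Finset.toLeft_disjSum_toRight (u := S.1)
  by_cases hR : S.1.toRight = ∅
  · refine .inl ⟨⟨S.1.toLeft, fun v hv w hw => S.2 _ (Finset.mem_toLeft.1 hv) _
      (Finset.mem_toLeft.1 hw)⟩, Subtype.ext ?_⟩
    rw [hR, Finset.disjSum_empty] at hS
    exact hS
  · obtain ⟨b, hb⟩ := Finset.nonempty_iff_ne_empty.2 hR
    have hL : S.1.toLeft = ∅ := Finset.eq_empty_of_forall_notMem fun a ha =>
      S.2 _ (Finset.mem_toLeft.1 ha) _ (Finset.mem_toRight.1 hb) trivial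
    refine .inr ⟨⟨S.1.toRight, fun v hv w hw => S.2 _ (Finset.mem_toRight.1 hv) _
      (Finset.mem_toRight.1 hw)⟩, Subtype.ext ?_⟩
    rw [hL, Finset.empty_disjSum] at hS
    exact hS

theorem exists_monomial_eq_rename_mul_rename (d : StabIdx (graphJoin G₁ G₂) →₀ ℕ) :
    ∃ a b, monomial d (1 : 𝕜) = ρ₁ (monomial a 1) * ρ₂ (monomial b 1) := by
  induction d using Finsupp.induction with
  | zero => exact ⟨0, 0, by simp⟩
  | single_add S k d _ _ ih =>
    obtain ⟨a, b, hab⟩ := ih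
    rw [monomial_single_add, hab]
    rcases exists_stabInclLeft_eq_or_exists_stabInclRight_eq G₁ G₂ S with ⟨T, rfl⟩ | ⟨T, rfl⟩
    · refine ⟨Finsupp.single T k + a, b, ?_⟩
      rw [monomial_single_add, map_mul, map_pow, rename_X, mul_assoc]
    · refine ⟨a, Finsupp.single T k + b, ?_⟩
      rw [monomial_single_add, map_mul, map_pow, rename_X, mul_left_comm]

theorem stabRingMap_rename_stabInclLeft (p : MvPolynomial (StabIdx G₁) 𝕜) :
    stabRingMap 𝕜 (graphJoin G₁ G₂) (ρ₁ p) =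
      rename (Option.map Sum.inl) (stabRingMap 𝕜 G₁ p) := by
  rw [← AlgHom.comp_apply, ← AlgHom.comp_apply]
  congr 1
  refine algHom_ext fun T => ?_
  simp only [AlgHom.comp_apply, rename_X, stabRingMap, aeval_X, map_mul, map_prod]
  simp [stabInclLeft, Finset.prod_map]

theorem stabRingMap_rename_stabInclRight (q : MvPolynomial (StabIdx G₂) 𝕜) :
    stabRingMap 𝕜 (graphJoin G₁ G₂) (ρ₂ q) =
      rename (Option.map Sum.inr) (stabRingMap 𝕜 G₂ q) := by
  rw [← AlgHom.comp_apply, ← AlgHom.comp_apply]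
  congr 1
  refine algHom_ext fun T => ?_
  simp only [AlgHom.comp_apply, rename_X, stabRingMap, aeval_X, map_mul, map_prod]
  simp [stabInclRight, Finset.prod_map]

variable {G₁ G₂}

theorem map_stabToricIdeal_left_le :
    Ideal.map (ρ₁).toRingHom (stabToricIdeal 𝕜 G₁) ≤ stabToricIdeal 𝕜 (graphJoin G₁ G₂) :=
  Ideal.map_le_iff_le_comap.2 fun p hp => by
    simp_all [stabToricIdeal, RingHom.mem_ker, stabRingMap_rename_stabInclLeft]

theorem map_stabToricIdeal_right_le :
    Ideal.map (ρ₂).toRingHom (stabToricIdeal 𝕜 G₂) ≤ stabToricIdeal 𝕜 (graphJoin G₁ G₂) :=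
  Ideal.map_le_iff_le_comap.2 fun p hp => by
    simp_all [stabToricIdeal, RingHom.mem_ker, stabRingMap_rename_stabInclRight]

theorem stabRingMap_rename_mul_rename_monomial (a : StabIdx G₁ →₀ ℕ) (b : StabIdx G₂ →₀ ℕ) :
    stabRingMap 𝕜 (graphJoin G₁ G₂) (ρ₁ (monomial a 1) * ρ₂ (monomial b 1)) =
      monomial ((stabExponent G₁ a).mapDomain (Option.map Sum.inl) +
        (stabExponent G₂ b).mapDomain (Option.map Sum.inr)) 1 := by
  rw [map_mul, stabRingMap_rename_stabInclLeft, stabRingMap_rename_stabInclRight,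
    stabRingMap_monomial, stabRingMap_monomial, rename_monomial, rename_monomial, monomial_mul,
    one_mul]

variable {a a' : StabIdx G₁ →₀ ℕ} {b b' : StabIdx G₂ →₀ ℕ}

theorem stabExponent_add_single_degree_eq_left
    (h : stabRingMap 𝕜 (graphJoin G₁ G₂) (ρ₁ (monomial a 1) * ρ₂ (monomial b 1)) =
      stabRingMap 𝕜 (graphJoin G₁ G₂) (ρ₁ (monomial a' 1) * ρ₂ (monomial b' 1))) :
    stabExponent G₁ a + Finsupp.single none b.degree =
      stabExponent G₁ a' + Finsupp.single none b'.degree := by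
  rw [stabRingMap_rename_mul_rename_monomial, stabRingMap_rename_mul_rename_monomial,
    monomial_left_inj one_ne_zero] at h
  ext o
  simpa [Finsupp.mapDomain_inl_add_mapDomain_inr_apply_map_inl, stabExponent_apply_none]
    using congr($h (o.map Sum.inl))

theorem stabExponent_add_single_degree_eq_right
    (h : stabRingMap 𝕜 (graphJoin G₁ G₂) (ρ₁ (monomial a 1) * ρ₂ (monomial b 1)) =
      stabRingMap 𝕜 (graphJoin G₁ G₂) (ρ₁ (monomial a' 1) * ρ₂ (monomial b' 1))) :
    stabExponent G₂ b + Finsupp.single none a.degree =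
      stabExponent G₂ b' + Finsupp.single none a'.degree := by
  rw [stabRingMap_rename_mul_rename_monomial, stabRingMap_rename_mul_rename_monomial,
    monomial_left_inj one_ne_zero] at h
  ext o
  simpa [Finsupp.mapDomain_inl_add_mapDomain_inr_apply_map_inr, stabExponent_apply_none, add_comm]
    using congr($h (o.map Sum.inr))

theorem rename_mul_rename_sub_mem_of_degree_le
    (h : stabRingMap 𝕜 (graphJoin G₁ G₂) (ρ₁ (monomial a 1) * ρ₂ (monomial b 1)) =
      stabRingMap 𝕜 (graphJoin G₁ G₂) (ρ₁ (monomial a' 1) * ρ₂ (monomial b' 1)))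
    (hle : b.degree ≤ b'.degree) :
    ρ₁ (monomial a 1) * ρ₂ (monomial b 1) - ρ₁ (monomial a' 1) * ρ₂ (monomial b' 1) ∈
      Ideal.map (ρ₁).toRingHom (stabToricIdeal 𝕜 G₁) ⊔
        Ideal.map (ρ₂).toRingHom (stabToricIdeal 𝕜 G₂) := by
  obtain ⟨k, hk⟩ := Nat.exists_eq_add_of_le hle
  have h₁ := stabExponent_add_single_degree_eq_left h
  have h₂ := stabExponent_add_single_degree_eq_right h
  have hdeg : a.degree = a'.degree + k := by
    have := congr($h₁ none)
    simp only [Finsupp.add_apply, stabExponent_apply_none, Finsupp.single_eq_same] at this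
    omega
  have hL : stabExponent G₁ a = stabExponent G₁ (a' + Finsupp.single (StabIdx.empty G₁) k) := by
    rw [map_add, stabExponent_single_empty]
    refine add_right_cancel (b := Finsupp.single none b.degree) ?_
    rw [h₁, hk, add_assoc, ← Finsupp.single_add, add_comm k]
  have hR : stabExponent G₂ (b + Finsupp.single (StabIdx.empty G₂) k) = stabExponent G₂ b' := by
    rw [map_add, stabExponent_single_empty]
    refine add_right_cancel (b := Finsupp.single none a'.degree) ?_
    rw [← h₂, hdeg, add_assoc, ← Finsupp.single_add, add_comm k]
  have hsplit : ρ₁ (monomial a 1) * ρ₂ (monomial b 1) - ρ₁ (monomial a' 1) * ρ₂ (monomial b' 1) =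
      ρ₁ (monomial a 1 - monomial (a' + Finsupp.single (StabIdx.empty G₁) k) 1) *
          ρ₂ (monomial b 1) +
        ρ₁ (monomial a' 1) *
          ρ₂ (monomial (b + Finsupp.single (StabIdx.empty G₂) k) 1 - monomial b' 1) := by
    simp only [map_sub, add_comm _ (Finsupp.single _ k), monomial_single_add, map_mul, map_pow,
      rename_X, stabInclLeft_empty_eq_stabInclRight_empty]
    ring
  rw [hsplit]
  exact add_mem
    (Ideal.mul_mem_right _ _ <| Ideal.mem_sup_left <| Ideal.mem_map_of_mem _ <|
      monomial_sub_monomial_mem_stabToricIdeal hL)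
    (Ideal.mul_mem_left _ _ <| Ideal.mem_sup_right <| Ideal.mem_map_of_mem _ <|
      monomial_sub_monomial_mem_stabToricIdeal hR)

end Join

theorem stable_set_ring_toric_splitting_general (𝕜 : Type*) [Field 𝕜]
    {V₁ V₂ : Type*}
    (G₁ : SimpleGraph V₁) (G₂ : SimpleGraph V₂) :
    stabToricIdeal 𝕜 (graphJoin G₁ G₂) =
      Ideal.map (rename (stabInclLeft G₁ G₂) : MvPolynomial (StabIdx G₁) 𝕜 →ₐ[𝕜] _).toRingHom
          (stabToricIdeal 𝕜 G₁) ⊔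
        Ideal.map (rename (stabInclRight G₁ G₂) : MvPolynomial (StabIdx G₂) 𝕜 →ₐ[𝕜] _).toRingHom
          (stabToricIdeal 𝕜 G₂) := by
  refine le_antisymm ?_ (sup_le map_stabToricIdeal_left_le map_stabToricIdeal_right_le)
  refine ker_le_of_binomial_mem _ (stabExponent _) stabRingMap_monomial fun d d' hdd' => ?_
  obtain ⟨a, b, hd⟩ := exists_monomial_eq_rename_mul_rename (𝕜 := 𝕜) G₁ G₂ d
  obtain ⟨a', b', hd'⟩ := exists_monomial_eq_rename_mul_rename (𝕜 := 𝕜) G₁ G₂ d'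
  have h : stabRingMap 𝕜 (graphJoin G₁ G₂) (monomial d 1) =
      stabRingMap 𝕜 (graphJoin G₁ G₂) (monomial d' 1) := by
    rw [stabRingMap_monomial, stabRingMap_monomial, hdd']
  rw [hd, hd'] at h ⊢
  rcases le_total b.degree b'.degree with hle | hle
  · exact rename_mul_rename_sub_mem_of_degree_le h hle
  · simpa using neg_mem (rename_mul_rename_sub_mem_of_degree_le h.symm hle)

theorem stable_set_ring_toric_splitting (𝕜 : Type*) [Field 𝕜]
    {V₁ V₂ : Type*} [Fintype V₁] [Fintype V₂]
    (G₁ : SimpleGraph V₁) (G₂ : SimpleGraph V₂) :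
    stabToricIdeal 𝕜 (graphJoin G₁ G₂) =
      Ideal.map (rename (stabInclLeft G₁ G₂) : MvPolynomial (StabIdx G₁) 𝕜 →ₐ[𝕜] _).toRingHom
          (stabToricIdeal 𝕜 G₁) ⊔
        Ideal.map (rename (stabInclRight G₁ G₂) : MvPolynomial (StabIdx G₂) 𝕜 →ₐ[𝕜] _).toRingHom
          (stabToricIdeal 𝕜 G₂) :=
  stable_set_ring_toric_splitting_general 𝕜 G₁ G₂
end

section
/- Let H₁ and H₂ be numerical semigroups, let x₁ ∈ H₁ ∖ G(H₁) and x₂ ∈ H₂ ∖ G(H₂) be nonzero with gcd(x₁, x₂) = 1, and let H = x₂·H₁ + x₁·H₂ be their gluing. Then the map (a, b) ↦ x₂·a + x₁·b is a bijection from Ap(H₁, x₁) × Ap(H₂, x₂) onto Ap(H, x₁·x₂); in particular Ap(H, x₁x₂) = { x₂·a + x₁·b : a ∈ Ap(H₁, x₁), b ∈ Ap(H₂, x₂) }. -/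
/-- A numerical semigroup: an additive submonoid of `ℕ` with finite complement. -/
def IsNumericalSemigroup (H : Set ℕ) : Prop :=
  0 ∈ H ∧ (∀ a ∈ H, ∀ b ∈ H, a + b ∈ H) ∧ Hᶜ.Finite

/-- The minimal generating system `G(H) = (H \ {0}) \ ((H \ {0}) + (H \ {0}))`. -/
def minGens (H : Set ℕ) : Set ℕ :=
  (H \ {0}) \ {x | ∃ a ∈ H \ {0}, ∃ b ∈ H \ {0}, x = a + b}

/-- The Apéry set `Ap(H, s) = {a ∈ H : a - s ∉ H}` (the subtraction taken in `ℤ`,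
i.e. `a` is not of the form `b + s` with `b ∈ H`). -/
def apery (H : Set ℕ) (s : ℕ) : Set ℕ :=
  {a | a ∈ H ∧ ¬ ∃ b ∈ H, a = b + s}

/-- The gluing `x₂·H₁ + x₁·H₂` of two numerical semigroups. -/
def glue (x₂ : ℕ) (H₁ : Set ℕ) (x₁ : ℕ) (H₂ : Set ℕ) : Set ℕ :=
  {n | ∃ a ∈ H₁, ∃ b ∈ H₂, n = x₂ * a + x₁ * b}

lemma mem_add_mul {H : Set ℕ} (hadd : ∀ a ∈ H, ∀ b ∈ H, a + b ∈ H)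
    {x : ℕ} (hx : x ∈ H) {c : ℕ} (hc : c ∈ H) (k : ℕ) : c + x * k ∈ H := by
  induction k with
  | zero => simpa using hc
  | succ k ih =>
      have : c + x * (k + 1) = (c + x * k) + x := by ring
      rw [this]
      exact hadd _ ih _ hx

lemma aux_eq {H : Set ℕ} (hadd : ∀ a ∈ H, ∀ b ∈ H, a + b ∈ H)
    {x y : ℕ} (hx : x ∈ H) (hx0 : x ≠ 0) (hy0 : y ≠ 0) (hcop : Nat.Coprime x y)
    {a c m : ℕ} (ha : a ∈ apery H x) (hc : c ∈ H)
    (heq : y * a = y * c + x * m) : a = c := by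
  have hy : 0 < y := Nat.pos_of_ne_zero hy0
  have hca : c ≤ a := Nat.le_of_mul_le_mul_left (by linarith [Nat.zero_le (x * m)]) hy
  obtain ⟨u, hu⟩ : ∃ u, a = c + u := ⟨a - c, by omega⟩
  have h2 : y * u = x * m := by
    have := heq
    rw [hu, Nat.mul_add] at this
    linarith
  have hxyu : x ∣ y * u := ⟨m, h2⟩
  have hdvd : x ∣ u := hcop.dvd_of_dvd_mul_left hxyu
  obtain ⟨k, hk⟩ := hdvd
  rcases k with _ | k
  · omega
  · exfalso
    apply ha.2
    refine ⟨c + x * k, mem_add_mul hadd hx hc k, ?_⟩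
    have : x * (k + 1) = x * k + x := by ring
    omega

lemma key_eq {H₁ H₂ : Set ℕ}
    (hadd₁ : ∀ a ∈ H₁, ∀ b ∈ H₁, a + b ∈ H₁)
    (hadd₂ : ∀ a ∈ H₂, ∀ b ∈ H₂, a + b ∈ H₂)
    {x₁ x₂ : ℕ} (hx₁H : x₁ ∈ H₁) (hx₂H : x₂ ∈ H₂)
    (hx₁0 : x₁ ≠ 0) (hx₂0 : x₂ ≠ 0) (hgcd : Nat.gcd x₁ x₂ = 1)
    {a b c d : ℕ} (ha : a ∈ apery H₁ x₁) (hb : b ∈ apery H₂ x₂)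
    (hc : c ∈ H₁) (hd : d ∈ H₂)
    (heq : x₂ * a + x₁ * b = x₂ * c + x₁ * d) : a = c ∧ b = d := by
  have hcop : Nat.Coprime x₁ x₂ := hgcd
  have h1 : 0 < x₁ := Nat.pos_of_ne_zero hx₁0
  have h2 : 0 < x₂ := Nat.pos_of_ne_zero hx₂0
  rcases le_total c a with hle | hle
  · obtain ⟨u, hu⟩ : ∃ u, a = c + u := ⟨a - c, by omega⟩
    have h3 : x₂ * u + x₁ * b = x₁ * d := by
      have := heq; rw [hu, Nat.mul_add] at this; linarith
    have hbd : b ≤ d := Nat.le_of_mul_le_mul_left (by linarith [Nat.zero_le (x₂ * u)]) h1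
    obtain ⟨v, hv⟩ : ∃ v, d = b + v := ⟨d - b, by omega⟩
    have h4 : x₂ * a = x₂ * c + x₁ * v := by
      rw [hu, Nat.mul_add]
      rw [hv, Nat.mul_add] at h3
      linarith
    have hac : a = c := aux_eq hadd₁ hx₁H hx₁0 hx₂0 hcop ha hc h4
    refine ⟨hac, ?_⟩
    have : x₁ * b = x₁ * d := by rw [hac] at heq; linarith
    exact Nat.eq_of_mul_eq_mul_left h1 this
  · obtain ⟨u, hu⟩ : ∃ u, c = a + u := ⟨c - a, by omega⟩
    have h3 : x₁ * b = x₁ * d + x₂ * u := by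
      have := heq; rw [hu, Nat.mul_add] at this; linarith
    have hbd : b = d := aux_eq hadd₂ hx₂H hx₂0 hx₁0 hcop.symm hb hd h3
    refine ⟨?_, hbd⟩
    have : x₂ * a = x₂ * c := by rw [hbd] at heq; linarith
    exact Nat.eq_of_mul_eq_mul_left h2 this


theorem apery_of_gluing (H₁ H₂ : Set ℕ)
    (hH₁ : IsNumericalSemigroup H₁) (hH₂ : IsNumericalSemigroup H₂)
    (x₁ x₂ : ℕ) (hx₁ : x₁ ∈ H₁ \ minGens H₁) (hx₂ : x₂ ∈ H₂ \ minGens H₂)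
    (hx₁0 : x₁ ≠ 0) (hx₂0 : x₂ ≠ 0) (hgcd : Nat.gcd x₁ x₂ = 1) :
    Set.BijOn (fun p : ℕ × ℕ => x₂ * p.1 + x₁ * p.2)
        (apery H₁ x₁ ×ˢ apery H₂ x₂) (apery (glue x₂ H₁ x₁ H₂) (x₁ * x₂)) ∧
      apery (glue x₂ H₁ x₁ H₂) (x₁ * x₂) =
        (fun p : ℕ × ℕ => x₂ * p.1 + x₁ * p.2) '' (apery H₁ x₁ ×ˢ apery H₂ x₂) := by
  have hadd₁ := hH₁.2.1
  have hadd₂ := hH₂.2.1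
  have hx₁H : x₁ ∈ H₁ := hx₁.1
  have hx₂H : x₂ ∈ H₂ := hx₂.1
  have hbij : Set.BijOn (fun p : ℕ × ℕ => x₂ * p.1 + x₁ * p.2)
      (apery H₁ x₁ ×ˢ apery H₂ x₂) (apery (glue x₂ H₁ x₁ H₂) (x₁ * x₂)) := by
    refine ⟨?_, ?_, ?_⟩
    · -- MapsTo
      rintro ⟨a, b⟩ ⟨ha, hb⟩
      refine ⟨⟨a, ha.1, b, hb.1, rfl⟩, ?_⟩
      rintro ⟨m, ⟨a', ha', b', hb', rfl⟩, heq⟩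
      have hc : a' + x₁ ∈ H₁ := hadd₁ _ ha' _ hx₁H
      have heq' : x₂ * a + x₁ * b = x₂ * (a' + x₁) + x₁ * b' := by
        simp only [] at heq
        rw [show x₂ * a + x₁ * b = x₂ * a' + x₁ * b' + x₁ * x₂ from heq]; ring
      have := (key_eq hadd₁ hadd₂ hx₁H hx₂H hx₁0 hx₂0 hgcd ha hb hc hb' heq').1
      exact ha.2 ⟨a', ha', this⟩
    · -- InjOn
      rintro ⟨a, b⟩ ⟨ha, hb⟩ ⟨c, d⟩ ⟨hc, hd⟩ heq
      obtain ⟨h1, h2⟩ := key_eq hadd₁ hadd₂ hx₁H hx₂H hx₁0 hx₂0 hgcd ha hb hc.1 hd.1 heq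
      exact Prod.ext h1 h2
    · -- SurjOn
      rintro n ⟨⟨a, ha, b, hb, rfl⟩, hn⟩
      have haA : a ∈ apery H₁ x₁ := by
        refine ⟨ha, ?_⟩
        rintro ⟨a', ha', rfl⟩
        exact hn ⟨x₂ * a' + x₁ * b, ⟨a', ha', b, hb, rfl⟩, by ring⟩
      have hbA : b ∈ apery H₂ x₂ := by
        refine ⟨hb, ?_⟩
        rintro ⟨b', hb', rfl⟩
        exact hn ⟨x₂ * a + x₁ * b', ⟨a, ha, b', hb', rfl⟩, by ring⟩
      exact ⟨(a, b), ⟨haA, hbA⟩, rfl⟩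
  exact ⟨hbij, hbij.image_eq.symm⟩
end

section
/- Let H₁ and H₂ be numerical semigroups, let x₁ ∈ H₁ ∖ G(H₁) and x₂ ∈ H₂ ∖ G(H₂) be nonzero with gcd(x₁, x₂) = 1, and let H = x₂·H₁ + x₁·H₂ be their gluing. Then PF(H) = { x₂·f + x₁·f′ + x₁·x₂ : f ∈ PF(H₁), f′ ∈ PF(H₂) }, and the map (f, f′) ↦ x₂·f + x₁·f′ + x₁x₂ is injective, so that t(H) = t(H₁)·t(H₂). -/
/-- Membership of an integer in (the image in `ℤ` of) a numerical semigroup. -/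
def intMem (H : Set ℕ) (z : ℤ) : Prop := ∃ n ∈ H, (n : ℤ) = z

/-- The set of pseudo-Frobenius numbers
`PF(H) = {x ∈ ℤ : x ∉ H and x + h ∈ H for all nonzero h ∈ H}`. -/
def pseudoFrobenius (H : Set ℕ) : Set ℤ :=
  {x | ¬ intMem H x ∧ ∀ h ∈ H, h ≠ 0 → intMem H (x + (h : ℤ))}

lemma aux_nonneg {H : Set ℕ} {z : ℤ} (h : intMem H z) : 0 ≤ z := by
  obtain ⟨n, _, rfl⟩ := h; positivity

lemma aux_add_mul {H : Set ℕ} (hcl : ∀ a ∈ H, ∀ b ∈ H, a + b ∈ H)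
    {z : ℤ} (hz : intMem H z) {x : ℕ} (hx : x ∈ H) {t : ℤ} (ht : 0 ≤ t) :
    intMem H (z + x * t) := by
  lift t to ℕ using ht
  induction t with
  | zero => simpa using hz
  | succ n ih =>
      obtain ⟨m, hm, hme⟩ := ih
      refine ⟨m + x, hcl m hm x hx, ?_⟩
      push_cast
      linarith

lemma aux_add_mem {H : Set ℕ} (hcl : ∀ a ∈ H, ∀ b ∈ H, a + b ∈ H)
    {z : ℤ} (hz : intMem H z) {x : ℕ} (hx : x ∈ H) :
    intMem H (z + x) := by
  simpa using aux_add_mul hcl hz hx (t := 1) (by norm_num)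

lemma intMem_glue_iff {H₁ H₂ : Set ℕ} {x₁ x₂ : ℕ} {z : ℤ} :
    intMem (glue x₂ H₁ x₁ H₂) z ↔
      ∃ a ∈ H₁, ∃ b ∈ H₂, z = (x₂ : ℤ) * a + (x₁ : ℤ) * b := by
  constructor
  · rintro ⟨n, ⟨a, ha, b, hb, rfl⟩, rfl⟩
    exact ⟨a, ha, b, hb, by push_cast; ring⟩
  · rintro ⟨a, ha, b, hb, rfl⟩
    exact ⟨x₂ * a + x₁ * b, ⟨a, ha, b, hb, rfl⟩, by push_cast; ring⟩

lemma key_div {x₁ x₂ : ℕ} (hx₁0 : x₁ ≠ 0) (hgcd : Nat.gcd x₁ x₂ = 1)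
    {A B : ℤ} (h : (x₂ : ℤ) * A = (x₁ : ℤ) * B) :
    ∃ t : ℤ, A = (x₁ : ℤ) * t ∧ B = (x₂ : ℤ) * t := by
  have hcop : IsCoprime (x₁ : ℤ) (x₂ : ℤ) := by
    rw [Int.isCoprime_iff_gcd_eq_one]
    simpa using hgcd
  have hdvd : (x₁ : ℤ) ∣ A := hcop.dvd_of_dvd_mul_left ⟨B, by linarith⟩
  obtain ⟨t, rfl⟩ := hdvd
  refine ⟨t, rfl, ?_⟩
  have hx : (x₁ : ℤ) ≠ 0 := by exact_mod_cast hx₁0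
  have : (x₁ : ℤ) * B = (x₁ : ℤ) * ((x₂ : ℤ) * t) := by ring_nf; linarith [h]
  exact mul_left_cancel₀ hx this

section Main

variable {H₁ H₂ : Set ℕ} (hH₁ : IsNumericalSemigroup H₁) (hH₂ : IsNumericalSemigroup H₂)
  {x₁ x₂ : ℕ} (hm₁ : x₁ ∈ H₁) (hm₂ : x₂ ∈ H₂)
  (hx₁0 : x₁ ≠ 0) (hx₂0 : x₂ ≠ 0) (hgcd : Nat.gcd x₁ x₂ = 1)

include hH₁ hH₂ hm₁ hm₂ hx₁0 hx₂0 hgcd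

lemma glue_superset {f f' : ℤ} (hf : f ∈ pseudoFrobenius H₁) (hf' : f' ∈ pseudoFrobenius H₂) :
    (x₂ : ℤ) * f + (x₁ : ℤ) * f' + (x₁ : ℤ) * (x₂ : ℤ) ∈ pseudoFrobenius (glue x₂ H₁ x₁ H₂) := by
  constructor
  · intro hmem
    obtain ⟨A, hA, B, hB, heq⟩ := intMem_glue_iff.1 hmem
    obtain ⟨t, ht1, ht2⟩ := key_div hx₁0 hgcd
      (A := f - A) (B := B - f' - x₂) (by linear_combination heq)
    rcases le_or_gt 0 t with ht | ht
    · exact hf.1 (by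
        have : f = (A : ℤ) + (x₁ : ℤ) * t := by linarith
        rw [this]
        exact aux_add_mul hH₁.2.1 ⟨A, hA, rfl⟩ hm₁ ht)
    · exact hf'.1 (by
        have : f' = (B : ℤ) + (x₂ : ℤ) * (-1 - t) := by linarith
        rw [this]
        exact aux_add_mul hH₂.2.1 ⟨B, hB, rfl⟩ hm₂ (by linarith))
  · rintro h ⟨a, ha, b, hb, rfl⟩ hne
    rcases Nat.eq_zero_or_pos a with ha0 | ha0
    · have hb0 : b ≠ 0 := by rintro rfl; simp [ha0] at hne
      have h1 : intMem H₂ (f' + b) := hf'.2 b hb hb0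
      have h2 : intMem H₁ (f + x₁) := hf.2 x₁ hm₁ hx₁0
      rw [intMem_glue_iff]
      obtain ⟨n, hn, hne1⟩ := h2
      obtain ⟨m, hm, hne2⟩ := h1
      refine ⟨n, hn, m, hm, ?_⟩
      subst ha0
      push_cast
      linear_combination -(x₂:ℤ) * hne1 - (x₁:ℤ) * hne2
    · have ha0' : a ≠ 0 := ha0.ne'
      have h1 : intMem H₁ (f + a) := hf.2 a ha ha0'
      have h2 : intMem H₂ (f' + x₂ + b) := by
        rcases Nat.eq_zero_or_pos b with hb0 | hb0
        · subst hb0; simpa using hf'.2 x₂ hm₂ hx₂0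
        · exact aux_add_mem hH₂.2.1 (hf'.2 x₂ hm₂ hx₂0) hb
      rw [intMem_glue_iff]
      obtain ⟨n, hn, hne1⟩ := h1
      obtain ⟨m, hm, hne2⟩ := h2
      refine ⟨n, hn, m, hm, ?_⟩
      push_cast
      linear_combination -(x₂:ℤ) * hne1 - (x₁:ℤ) * hne2

lemma glue_subset {g : ℤ} (hg : g ∈ pseudoFrobenius (glue x₂ H₁ x₁ H₂)) :
    ∃ f ∈ pseudoFrobenius H₁, ∃ f' ∈ pseudoFrobenius H₂,
      g = (x₂ : ℤ) * f + (x₁ : ℤ) * f' + (x₁ : ℤ) * (x₂ : ℤ) := by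
  classical
  obtain ⟨hg1, hg2⟩ := hg
  have hxx : (x₂ * x₁ : ℕ) ∈ glue x₂ H₁ x₁ H₂ := ⟨x₁, hm₁, 0, hH₂.1, by ring⟩
  have h1 : intMem (glue x₂ H₁ x₁ H₂) (g + (x₂ * x₁ : ℕ)) :=
    hg2 _ hxx (Nat.mul_ne_zero hx₂0 hx₁0)
  obtain ⟨a₀, ha₀, b₀, hb₀, heq₀⟩ := intMem_glue_iff.1 h1
  -- pick minimal representative in the class of a₀
  set P : ℕ → Prop := fun k => intMem H₁ ((a₀ : ℤ) - (x₁ : ℤ) * k) with hP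
  have hP0 : P 0 := ⟨a₀, ha₀, by push_cast; ring⟩
  set K : ℕ := Nat.findGreatest P a₀ with hK
  have hspec : P K := Nat.findGreatest_spec (Nat.zero_le a₀) hP0
  have hgt : ¬ P (K + 1) := by
    rcases le_or_gt (K + 1) a₀ with hle | hlt
    · exact Nat.findGreatest_is_greatest (Nat.lt_succ_self K) hle
    · intro hmem
      have h0 := aux_nonneg hmem
      have hx1 : (1 : ℤ) ≤ (x₁ : ℤ) := by
        exact_mod_cast Nat.one_le_iff_ne_zero.2 hx₁0
      have hKn : (0 : ℤ) ≤ ((K + 1 : ℕ) : ℤ) := by positivity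
      have h2 : ((K + 1 : ℕ) : ℤ) ≤ (x₁ : ℤ) * ((K + 1 : ℕ) : ℤ) :=
        le_mul_of_one_le_left hKn hx1
      have ha : (a₀ : ℤ) < ((K + 1 : ℕ) : ℤ) := by exact_mod_cast hlt
      linarith
  set f : ℤ := (a₀ : ℤ) - (x₁ : ℤ) * (K + 1) with hf
  set f' : ℤ := (b₀ : ℤ) + (x₂ : ℤ) * ((K : ℤ) - 1) with hf'
  have hrep : g = (x₂ : ℤ) * f + (x₁ : ℤ) * f' + (x₁ : ℤ) * (x₂ : ℤ) := by
    rw [hf, hf']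
    push_cast at heq₀ ⊢
    linarith [heq₀]
  have e : ((a₀ : ℤ) - (x₁ : ℤ) * ((K + 1 : ℕ) : ℤ)) = f := by rw [hf]; push_cast; ring
  have hfnot : ¬ intMem H₁ f := by
    intro hmem
    apply hgt
    show intMem H₁ ((a₀ : ℤ) - (x₁ : ℤ) * ((K + 1 : ℕ) : ℤ))
    rwa [e]
  have hfx : intMem H₁ (f + x₁) := by
    have : f + (x₁ : ℤ) = (a₀ : ℤ) - (x₁ : ℤ) * K := by rw [hf]; ring
    rw [this]; exact hspec
  have hf'not : ¬ intMem H₂ f' := by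
    rintro ⟨m, hm, hme⟩
    obtain ⟨n, hn, hne⟩ := hfx
    exact hg1 (intMem_glue_iff.2 ⟨n, hn, m, hm, by
      linear_combination hrep - (x₂:ℤ) * hne - (x₁:ℤ) * hme⟩)
  refine ⟨f, ⟨hfnot, ?_⟩, f', ⟨hf'not, ?_⟩, hrep⟩
  · intro c hc hc0
    have hcel : (x₂ * c : ℕ) ∈ glue x₂ H₁ x₁ H₂ := ⟨c, hc, 0, hH₂.1, by ring⟩
    obtain ⟨A, hA, B, hB, heq⟩ := intMem_glue_iff.1 (hg2 _ hcel (Nat.mul_ne_zero hx₂0 hc0))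
    obtain ⟨t, ht1, ht2⟩ := key_div hx₁0 hgcd
      (A := f + (c : ℤ) - A) (B := B - f' - x₂) (by push_cast at heq; linear_combination heq - hrep)
    rcases le_or_gt 0 t with ht | ht
    · have : f + (c : ℤ) = (A : ℤ) + (x₁ : ℤ) * t := by linarith
      rw [this]
      exact aux_add_mul hH₁.2.1 ⟨A, hA, rfl⟩ hm₁ ht
    · exact absurd (by
        have : f' = (B : ℤ) + (x₂ : ℤ) * (-1 - t) := by linarith
        rw [this]
        exact aux_add_mul hH₂.2.1 ⟨B, hB, rfl⟩ hm₂ (by linarith)) hf'not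
  · intro d hd hd0
    have hdel : (x₁ * d : ℕ) ∈ glue x₂ H₁ x₁ H₂ := ⟨0, hH₁.1, d, hd, by ring⟩
    obtain ⟨A, hA, B, hB, heq⟩ := intMem_glue_iff.1 (hg2 _ hdel (Nat.mul_ne_zero hx₁0 hd0))
    obtain ⟨t, ht1, ht2⟩ := key_div hx₁0 hgcd
      (A := f + (x₁ : ℤ) - A) (B := B - f' - d) (by push_cast at heq; linear_combination heq - hrep)
    rcases le_or_gt 0 t with ht | ht
    · rcases lt_or_eq_of_le ht with ht' | ht'
      · exact absurd (by
          have : f = (A : ℤ) + (x₁ : ℤ) * (t - 1) := by linarith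
          rw [this]
          exact aux_add_mul hH₁.2.1 ⟨A, hA, rfl⟩ hm₁ (by linarith)) hfnot
      · -- t = 0
        have : f' + (d : ℤ) = (B : ℤ) := by rw [← ht'] at ht2; simp at ht2; linarith
        rw [this]
        exact ⟨B, hB, rfl⟩
    · have : f' + (d : ℤ) = (B : ℤ) + (x₂ : ℤ) * (-t) := by linarith
      rw [this]
      exact aux_add_mul hH₂.2.1 ⟨B, hB, rfl⟩ hm₂ (by linarith)


lemma glue_injOn :
    Set.InjOn (fun p : ℤ × ℤ => (x₂ : ℤ) * p.1 + (x₁ : ℤ) * p.2 + (x₁ : ℤ) * (x₂ : ℤ))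
      (pseudoFrobenius H₁ ×ˢ pseudoFrobenius H₂) := by
  have natmul : ∀ {H : Set ℕ}, (∀ a ∈ H, ∀ b ∈ H, a + b ∈ H) → ∀ {x : ℕ}, x ∈ H →
      ∀ k : ℕ, k ≠ 0 → x * k ∈ H := by
    intro H hcl x hx k hk
    induction k with
    | zero => simp at hk
    | succ n ih =>
        rcases Nat.eq_zero_or_pos n with h | h
        · subst h; simpa using hx
        · have := hcl _ (ih h.ne') _ hx
          simpa [Nat.mul_succ] using this
  rintro ⟨f₁, f₁'⟩ hp₁ ⟨f₂, f₂'⟩ hp₂ heq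
  simp only [Set.mem_prod] at hp₁ hp₂
  simp only at heq
  obtain ⟨t, ht1, ht2⟩ := key_div hx₁0 hgcd
    (A := f₁ - f₂) (B := f₂' - f₁') (by linear_combination heq)
  rcases lt_trichotomy t 0 with ht | ht | ht
  · exfalso
    apply hp₁.2.1
    have hk : (x₂ * (-t).toNat : ℕ) ∈ H₂ := natmul hH₂.2.1 hm₂ _ (by
      simp [hx₂0]; omega)
    have := hp₂.2.2 _ hk (by simp [hx₂0]; omega)
    have he : f₂' + ((x₂ * (-t).toNat : ℕ) : ℤ) = f₁' := by
      push_cast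
      have : ((-t).toNat : ℤ) = -t := Int.toNat_of_nonneg (by omega)
      rw [this]; linarith
    rwa [he] at this
  · subst ht
    simp only [mul_zero] at ht1 ht2
    have h1 : f₁ = f₂ := by linarith
    have h2 : f₁' = f₂' := by linarith
    simp [h1, h2]
  · exfalso
    apply hp₁.1.1
    have hk : (x₁ * t.toNat : ℕ) ∈ H₁ := natmul hH₁.2.1 hm₁ _ (by
      simp [hx₁0]; omega)
    have := hp₂.1.2 _ hk (by simp [hx₁0]; omega)
    have he : f₂ + ((x₁ * t.toNat : ℕ) : ℤ) = f₁ := by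
      push_cast
      have : (t.toNat : ℤ) = t := Int.toNat_of_nonneg (by omega)
      rw [this]; linarith
    rwa [he] at this

end Main

theorem pseudoFrobenius_of_gluing (H₁ H₂ : Set ℕ)
    (hH₁ : IsNumericalSemigroup H₁) (hH₂ : IsNumericalSemigroup H₂)
    (x₁ x₂ : ℕ) (hx₁ : x₁ ∈ H₁ \ minGens H₁) (hx₂ : x₂ ∈ H₂ \ minGens H₂)
    (hx₁0 : x₁ ≠ 0) (hx₂0 : x₂ ≠ 0) (hgcd : Nat.gcd x₁ x₂ = 1) :
    pseudoFrobenius (glue x₂ H₁ x₁ H₂) =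
        (fun p : ℤ × ℤ => (x₂ : ℤ) * p.1 + (x₁ : ℤ) * p.2 + (x₁ : ℤ) * (x₂ : ℤ)) ''
          (pseudoFrobenius H₁ ×ˢ pseudoFrobenius H₂) ∧
      Set.InjOn (fun p : ℤ × ℤ => (x₂ : ℤ) * p.1 + (x₁ : ℤ) * p.2 + (x₁ : ℤ) * (x₂ : ℤ))
        (pseudoFrobenius H₁ ×ˢ pseudoFrobenius H₂) ∧
      (pseudoFrobenius (glue x₂ H₁ x₁ H₂)).ncard =
        (pseudoFrobenius H₁).ncard * (pseudoFrobenius H₂).ncard := by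
  have hm₁ : x₁ ∈ H₁ := hx₁.1
  have hm₂ : x₂ ∈ H₂ := hx₂.1
  have hinj := glue_injOn hH₁ hH₂ hm₁ hm₂ hx₁0 hx₂0 hgcd
  have hset : pseudoFrobenius (glue x₂ H₁ x₁ H₂) =
      (fun p : ℤ × ℤ => (x₂ : ℤ) * p.1 + (x₁ : ℤ) * p.2 + (x₁ : ℤ) * (x₂ : ℤ)) ''
        (pseudoFrobenius H₁ ×ˢ pseudoFrobenius H₂) := by
    ext g
    constructor
    · intro hg
      obtain ⟨f, hf, f', hf', hrep⟩ := glue_subset hH₁ hH₂ hm₁ hm₂ hx₁0 hx₂0 hgcd hg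
      exact ⟨(f, f'), Set.mem_prod.2 ⟨hf, hf'⟩, hrep.symm⟩
    · rintro ⟨⟨f, f'⟩, hp, rfl⟩
      have hp' := Set.mem_prod.1 hp
      exact glue_superset hH₁ hH₂ hm₁ hm₂ hx₁0 hx₂0 hgcd hp'.1 hp'.2
  refine ⟨hset, hinj, ?_⟩
  rw [hset, Set.ncard_image_of_injOn hinj, ← Nat.card_coe_set_eq,
    ← Nat.card_coe_set_eq, ← Nat.card_coe_set_eq,
    Nat.card_congr (Equiv.Set.prod _ _), Nat.card_prod]
end

section
/- Let H₁ and H₂ be numerical semigroups, let x₁ ∈ H₁ ∖ G(H₁) and x₂ ∈ H₂ ∖ G(H₂) be nonzero with gcd(x₁, x₂) = 1, and let H = x₂·H₁ + x₁·H₂ be their gluing. Then the following are equivalent: (1) H is almost symmetric; (2) H is symmetric; (3) H₁ and H₂ are both symmetric. -/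
/-- `F` is the Frobenius number of `H`: the largest integer not belonging to `H`
(with the convention `F(ℕ) = -1`). -/
def IsFrobeniusNumber (H : Set ℕ) (F : ℤ) : Prop :=
  ¬ intMem H F ∧ ∀ z : ℤ, F < z → intMem H z

/-- `H` is symmetric: for every `z ∈ ℤ`, either `z ∈ H` or `F(H) - z ∈ H`. -/
def IsSymmetricNSG (H : Set ℕ) : Prop :=
  ∃ F : ℤ, IsFrobeniusNumber H F ∧ ∀ z : ℤ, intMem H z ∨ intMem H (F - z)

/-- `H` is almost symmetric: every `z ∈ ℤ` with `z ∉ H` and `F(H) - z ∉ H` is a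
pseudo-Frobenius number of `H`. -/
def IsAlmostSymmetricNSG (H : Set ℕ) : Prop :=
  ∃ F : ℤ, IsFrobeniusNumber H F ∧
    ∀ z : ℤ, ¬ intMem H z → ¬ intMem H (F - z) → z ∈ pseudoFrobenius H

namespace NSGG


lemma hmul {H : Set ℕ} (h0 : 0 ∈ H) (hadd : ∀ a ∈ H, ∀ b ∈ H, a + b ∈ H)
    {x : ℕ} (hx : x ∈ H) : ∀ k : ℕ, k * x ∈ H := by
  intro k
  induction k with
  | zero => simpa using h0
  | succ n ih => simpa [Nat.succ_mul] using hadd _ ih _ hx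

lemma intMem_congr {H : Set ℕ} {z z' : ℤ} (h : intMem H z) (he : z = z') : intMem H z' :=
  he ▸ h

lemma intMem_nonneg {H : Set ℕ} {z : ℤ} (h : intMem H z) : 0 ≤ z := by
  obtain ⟨n, -, h⟩ := h; omega

lemma intMem_addmul {H : Set ℕ} (h0 : 0 ∈ H) (hadd : ∀ a ∈ H, ∀ b ∈ H, a + b ∈ H)
    {x c : ℕ} (hx : x ∈ H) (hc : c ∈ H) {z m : ℤ} (hm : 0 ≤ m)
    (hz : z = (c : ℤ) + (x : ℤ) * m) : intMem H z := by
  refine ⟨c + m.toNat * x, hadd _ hc _ (hmul h0 hadd hx m.toNat), ?_⟩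
  have h1 : ((m.toNat : ℤ)) = m := Int.toNat_of_nonneg hm
  have h2 : ((c + m.toNat * x : ℕ) : ℤ) = (c : ℤ) + ((m.toNat : ℤ)) * x := by push_cast; ring
  rw [h2, h1]
  linarith

lemma exists_frob {H : Set ℕ} (hH : IsNumericalSemigroup H) : ∃ F, IsFrobeniusNumber H F := by
  obtain ⟨h0, hadd, hfin⟩ := hH
  classical
  rcases Set.eq_empty_or_nonempty Hᶜ with he | hne
  · refine ⟨-1, ?_, ?_⟩
    · rintro ⟨n, -, h⟩; omega
    · intro z hz
      have hz0 : 0 ≤ z := by omega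
      refine ⟨z.toNat, ?_, by omega⟩
      by_contra h
      have : z.toNat ∈ Hᶜ := h
      rw [he] at this
      exact this
  · have hTne : hfin.toFinset.Nonempty := hfin.toFinset_nonempty.mpr hne
    set M := hfin.toFinset.max' hTne with hM
    have hMc : M ∈ Hᶜ := hfin.mem_toFinset.mp (hfin.toFinset.max'_mem hTne)
    refine ⟨(M : ℤ), ?_, ?_⟩
    · rintro ⟨n, hn, hc⟩
      have : n = M := by exact_mod_cast hc
      exact hMc (this ▸ hn)
    · intro z hz
      refine ⟨z.toNat, ?_, by omega⟩
      by_contra h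
      have hT : z.toNat ∈ hfin.toFinset := hfin.mem_toFinset.mpr h
      have := hfin.toFinset.le_max' _ hT
      omega

lemma frob_unique {H : Set ℕ} {F F' : ℤ} (h : IsFrobeniusNumber H F)
    (h' : IsFrobeniusNumber H F') : F = F' := by
  by_contra hne
  rcases lt_or_gt_of_ne hne with hlt | hlt
  · exact h'.1 (h.2 _ hlt)
  · exact h.1 (h'.2 _ hlt)

lemma exists_residue {x₁ x₂ : ℕ} (hx₂pos : (0:ℤ) < (x₂:ℤ))
    (hcop : IsCoprime (x₁:ℤ) (x₂:ℤ)) (z lo : ℤ) :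
    ∃ r : ℤ, lo < r ∧ r ≤ lo + x₂ ∧ (x₂:ℤ) ∣ z - x₁ * r := by
  obtain ⟨u, v, huv⟩ := hcop
  set s : ℤ := u * z with hs
  refine ⟨lo + 1 + (s - lo - 1) % x₂, ?_, ?_, ?_⟩
  · have := Int.emod_nonneg (s - lo - 1) (ne_of_gt hx₂pos); omega
  · have := Int.emod_lt_of_pos (s - lo - 1) hx₂pos; omega
  · have h1 : (x₂:ℤ) ∣ (s - (lo + 1 + (s - lo - 1) % x₂)) := by
      refine ⟨(s - lo - 1) / x₂, ?_⟩
      rw [Int.emod_def]; ring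
    have h2 : (x₂:ℤ) ∣ (z - x₁ * s) := ⟨z * v, by linear_combination -z*huv⟩
    have h3 : z - x₁ * (lo + 1 + (s - lo - 1) % x₂)
        = (z - x₁ * s) + x₁ * (s - (lo + 1 + (s - lo - 1) % x₂)) := by ring
    rw [h3]
    exact dvd_add h2 (h1.mul_left _)


section Core

variable {H₁ H₂ : Set ℕ} {x₁ x₂ : ℕ}
variable (h0₁ : 0 ∈ H₁) (hadd₁ : ∀ a ∈ H₁, ∀ b ∈ H₁, a + b ∈ H₁)
variable (h0₂ : 0 ∈ H₂) (hadd₂ : ∀ a ∈ H₂, ∀ b ∈ H₂, a + b ∈ H₂)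
variable (hx₁H : x₁ ∈ H₁) (hx₂H : x₂ ∈ H₂) (hx₁0 : x₁ ≠ 0) (hx₂0 : x₂ ≠ 0)
variable (hcop : IsCoprime (x₁:ℤ) (x₂:ℤ))

lemma glue_comm : glue x₂ H₁ x₁ H₂ = glue x₁ H₂ x₂ H₁ := by
  ext n
  constructor <;> rintro ⟨a, ha, b, hb, rfl⟩ <;> exact ⟨b, hb, a, ha, by ring⟩

lemma mem_glue_of {u v : ℤ} (hu : intMem H₁ u) (hv : intMem H₂ v) :
    intMem (glue x₂ H₁ x₁ H₂) ((x₂:ℤ) * u + (x₁:ℤ) * v) := by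
  obtain ⟨a, ha, rfl⟩ := hu
  obtain ⟨b, hb, rfl⟩ := hv
  exact ⟨x₂ * a + x₁ * b, ⟨a, ha, b, hb, rfl⟩, by push_cast; ring⟩

include h0₁ hadd₁ h0₂ hadd₂ hx₁H hx₂H hx₂0 hcop in
lemma notMem_glue {f₁ f₂ : ℤ} (h1 : ¬ intMem H₁ f₁) (h2 : ¬ intMem H₂ f₂) :
    ¬ intMem (glue x₂ H₁ x₁ H₂) ((x₂:ℤ) * f₁ + (x₁:ℤ) * f₂ + (x₁:ℤ) * (x₂:ℤ)) := by
  rintro ⟨n, ⟨a, ha, b, hb, rfl⟩, hcast⟩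
  push_cast at hcast
  have hdvd : (x₂:ℤ) ∣ (x₁:ℤ) * (f₂ + x₂ - b) := ⟨(a:ℤ) - f₁, by linear_combination -hcast⟩
  have hdvd2 : (x₂:ℤ) ∣ (f₂ + x₂ - b) := (hcop.symm).dvd_of_dvd_mul_left hdvd
  obtain ⟨m, hm⟩ := hdvd2
  have hx₂Z : (x₂:ℤ) ≠ 0 := by exact_mod_cast hx₂0
  have key : (a:ℤ) - f₁ = x₁ * m := by
    refine mul_left_cancel₀ hx₂Z ?_
    linear_combination hcast + (x₁:ℤ) * hm
  rcases le_or_gt 1 m with hm1 | hm1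
  · exact h2 (intMem_addmul h0₂ hadd₂ hx₂H hb (m := m - 1) (by omega) (by linear_combination hm))
  · exact h1 (intMem_addmul h0₁ hadd₁ hx₁H ha (m := -m) (by omega) (by linear_combination -key))

include hcop hx₁0 hx₂0 in
lemma glue_gt_mem {F₁ F₂ : ℤ} (hF₁ : IsFrobeniusNumber H₁ F₁) (hF₂ : IsFrobeniusNumber H₂ F₂) :
    ∀ z : ℤ, (x₂:ℤ) * F₁ + (x₁:ℤ) * F₂ + (x₁:ℤ) * (x₂:ℤ) < z →
      intMem (glue x₂ H₁ x₁ H₂) z := by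
  intro z hz
  have hx₂pos : (0:ℤ) < (x₂:ℤ) := by exact_mod_cast Nat.pos_of_ne_zero hx₂0
  have hx₁pos : (0:ℤ) < (x₁:ℤ) := by exact_mod_cast Nat.pos_of_ne_zero hx₁0
  obtain ⟨r, hr1, hr2, hrd⟩ := exists_residue hx₂pos hcop z F₂
  obtain ⟨q, hq⟩ := hrd
  have hrq : intMem H₂ r := hF₂.2 r hr1
  have hqF : F₁ < q := by
    have h1 : (x₁:ℤ) * r ≤ (x₁:ℤ) * (F₂ + x₂) := mul_le_mul_of_nonneg_left hr2 (le_of_lt hx₁pos)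
    have h3 : (x₁:ℤ) * (F₂ + x₂) = (x₁:ℤ) * F₂ + (x₁:ℤ) * x₂ := by ring
    have h2 : (x₂:ℤ) * F₁ < (x₂:ℤ) * q := by linarith
    exact lt_of_mul_lt_mul_left h2 (le_of_lt hx₂pos)
  exact intMem_congr (mem_glue_of (hF₁.2 q hqF) hrq) (by linear_combination -hq)

include h0₂ hadd₂ hx₂H hx₁0 hcop in
lemma extract_right {g : ℤ} (h : intMem (glue x₂ H₁ x₁ H₂) ((x₁:ℤ) * g)) : intMem H₂ g := by
  obtain ⟨n, ⟨a, ha, b, hb, rfl⟩, hc⟩ := h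
  push_cast at hc
  have hdvd : (x₁:ℤ) ∣ (x₂:ℤ) * a := ⟨g - b, by linear_combination hc⟩
  have hdvd2 : (x₁:ℤ) ∣ (a:ℤ) := hcop.dvd_of_dvd_mul_left hdvd
  have hdn : x₁ ∣ a := by exact_mod_cast hdvd2
  obtain ⟨a', rfl⟩ := hdn
  have hx₁Z : (x₁:ℤ) ≠ 0 := by exact_mod_cast hx₁0
  have hg : g = (x₂:ℤ) * a' + b := by
    refine mul_left_cancel₀ hx₁Z ?_
    push_cast at hc ⊢
    linear_combination -hc
  exact ⟨a' * x₂ + b, hadd₂ _ (hmul h0₂ hadd₂ hx₂H a') _ hb, by push_cast; linear_combination -hg⟩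

end Core

section Main

variable {H₁ H₂ : Set ℕ} {x₁ x₂ : ℕ} {F₁ F₂ : ℤ}
variable (h0₁ : 0 ∈ H₁) (hadd₁ : ∀ a ∈ H₁, ∀ b ∈ H₁, a + b ∈ H₁)
variable (h0₂ : 0 ∈ H₂) (hadd₂ : ∀ a ∈ H₂, ∀ b ∈ H₂, a + b ∈ H₂)
variable (hx₁H : x₁ ∈ H₁) (hx₂H : x₂ ∈ H₂) (hx₁0 : x₁ ≠ 0) (hx₂0 : x₂ ≠ 0)
variable (hcop : IsCoprime (x₁:ℤ) (x₂:ℤ))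
variable (hF₁ : IsFrobeniusNumber H₁ F₁) (hF₂ : IsFrobeniusNumber H₂ F₂)

include hx₂0 hcop hF₂ in
lemma sym_glue_of
    (d₁ : ∀ z : ℤ, intMem H₁ z ∨ intMem H₁ (F₁ - z))
    (d₂ : ∀ z : ℤ, intMem H₂ z ∨ intMem H₂ (F₂ - z)) :
    ∀ z : ℤ, intMem (glue x₂ H₁ x₁ H₂) z ∨
      intMem (glue x₂ H₁ x₁ H₂) ((x₂:ℤ) * F₁ + (x₁:ℤ) * F₂ + (x₁:ℤ) * (x₂:ℤ) - z) := by
  intro z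
  have hx₂pos : (0:ℤ) < (x₂:ℤ) := by exact_mod_cast Nat.pos_of_ne_zero hx₂0
  obtain ⟨r, hr1, hr2, hrd⟩ := exists_residue hx₂pos hcop z F₂
  obtain ⟨b₀, hb₀, hb₀c⟩ := hF₂.2 r hr1
  set S : Set ℕ := {b | b ∈ H₂ ∧ (x₂:ℤ) ∣ z - (x₁:ℤ) * b} with hS
  have hSne : S.Nonempty := ⟨b₀, hb₀, by rw [hb₀c]; exact hrd⟩
  have hvS := Nat.sInf_mem hSne
  set v : ℕ := sInf S with hv
  obtain ⟨hvH, hvd⟩ := hvS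
  obtain ⟨u, hu⟩ := hvd
  rcases d₁ u with h | h
  · exact Or.inl (intMem_congr (mem_glue_of h ⟨v, hvH, rfl⟩) (by linear_combination -hu))
  · right
    have hnv : ¬ intMem H₂ ((v:ℤ) - (x₂:ℤ)) := by
      rintro ⟨b', hb', hbc⟩
      have hb'S : b' ∈ S := ⟨hb', ⟨u + x₁, by linear_combination hu - (x₁:ℤ) * hbc⟩⟩
      have hle : v ≤ b' := by rw [hv]; exact Nat.sInf_le hb'S
      omega
    have h2 := (d₂ ((v:ℤ) - (x₂:ℤ))).resolve_left hnv
    exact intMem_congr (mem_glue_of h h2) (by linear_combination hu)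

include h0₁ hadd₁ h0₂ hadd₂ hx₁H hx₂H hx₁0 hx₂0 hcop in
lemma pf_structure {p : ℤ} (hp : p ∈ pseudoFrobenius (glue x₂ H₁ x₁ H₂)) :
    ∃ f₁ f₂ : ℤ, p = (x₂:ℤ) * f₁ + (x₁:ℤ) * f₂ + (x₁:ℤ) * (x₂:ℤ) ∧
      (¬ intMem H₁ f₁ ∧ ∀ h ∈ H₁, h ≠ 0 → intMem H₁ (f₁ + (h:ℤ))) ∧
      (¬ intMem H₂ f₂ ∧ ∀ h ∈ H₂, h ≠ 0 → intMem H₂ (f₂ + (h:ℤ))) := by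
  obtain ⟨hpnot, hpall⟩ := hp
  have hx₁Z : (x₁:ℤ) ≠ 0 := by exact_mod_cast hx₁0
  have hx₂Z : (x₂:ℤ) ≠ 0 := by exact_mod_cast hx₂0
  have hGel : (x₂ * x₁ : ℕ) ∈ glue x₂ H₁ x₁ H₂ := ⟨x₁, hx₁H, 0, h0₂, by ring⟩
  have h1 := hpall _ hGel (Nat.mul_ne_zero hx₂0 hx₁0)
  set S : Set ℕ := {b | b ∈ H₂ ∧ ∃ a : ℕ, a ∈ H₁ ∧
    p + (x₁:ℤ) * (x₂:ℤ) = (x₂:ℤ) * a + (x₁:ℤ) * b} with hS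
  have hSne : S.Nonempty := by
    obtain ⟨n, ⟨a, ha, b, hb, rfl⟩, hc⟩ := h1
    push_cast at hc
    exact ⟨b, hb, a, ha, by linear_combination -hc⟩
  have hvS := Nat.sInf_mem hSne
  set v : ℕ := sInf S with hv
  obtain ⟨hbH, a, haH, heq⟩ := hvS
  have hf1not : ¬ intMem H₁ ((a:ℤ) - (x₁:ℤ)) := by
    rintro ⟨a', ha', hac⟩
    apply hpnot
    exact ⟨x₂ * a' + x₁ * v, ⟨a', ha', v, hbH, rfl⟩,
      by push_cast; linear_combination (x₂:ℤ) * hac - heq⟩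
  have hf2not : ¬ intMem H₂ ((v:ℤ) - (x₂:ℤ)) := by
    rintro ⟨b', hb', hbc⟩
    have hb'S : b' ∈ S := ⟨hb', a + x₁, hadd₁ _ haH _ hx₁H,
      by push_cast; linear_combination heq - (x₁:ℤ) * hbc⟩
    have hle : v ≤ b' := by rw [hv]; exact Nat.sInf_le hb'S
    omega
  refine ⟨(a:ℤ) - (x₁:ℤ), (v:ℤ) - (x₂:ℤ), by linear_combination heq, ⟨hf1not, ?_⟩,
    ⟨hf2not, ?_⟩⟩
  · -- f₁ pseudo-Frobenius property
    intro h₁ hh₁ hne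
    have hG : (x₂ * h₁ : ℕ) ∈ glue x₂ H₁ x₁ H₂ := ⟨h₁, hh₁, 0, h0₂, by ring⟩
    obtain ⟨n, ⟨c, hc, d, hd, rfl⟩, hcc⟩ := hpall _ hG (Nat.mul_ne_zero hx₂0 hne)
    push_cast at hcc
    have heq3 : (x₂:ℤ) * (((a:ℤ) - (x₁:ℤ)) + (h₁:ℤ) - (c:ℤ)) = (x₁:ℤ) * ((d:ℤ) - (v:ℤ)) := by
      linear_combination -hcc - heq
    have hdvd : (x₂:ℤ) ∣ ((d:ℤ) - (v:ℤ)) :=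
      (hcop.symm).dvd_of_dvd_mul_left ⟨_, heq3.symm⟩
    obtain ⟨t, ht⟩ := hdvd
    have hft : ((a:ℤ) - (x₁:ℤ)) + (h₁:ℤ) - (c:ℤ) = (x₁:ℤ) * t := by
      refine mul_left_cancel₀ hx₂Z ?_
      linear_combination heq3 + (x₁:ℤ) * ht
    rcases le_or_gt 0 t with ht0 | ht0
    · exact intMem_addmul h0₁ hadd₁ hx₁H hc ht0 (by linear_combination hft)
    · exact absurd (intMem_addmul h0₂ hadd₂ hx₂H hd (m := -t - 1) (by omega)
        (by linear_combination -ht)) hf2not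
  · -- f₂ pseudo-Frobenius property
    intro h₂ hh₂ hne
    have hG : (x₁ * h₂ : ℕ) ∈ glue x₂ H₁ x₁ H₂ := ⟨0, h0₁, h₂, hh₂, by ring⟩
    obtain ⟨n, ⟨c, hc, d, hd, rfl⟩, hcc⟩ := hpall _ hG (Nat.mul_ne_zero hx₁0 hne)
    push_cast at hcc
    have heq2 : (x₁:ℤ) * (((v:ℤ) - (x₂:ℤ)) + (h₂:ℤ) - (d:ℤ)) = (x₂:ℤ) * ((c:ℤ) - (a:ℤ)) := by
      linear_combination -hcc - heq
    have hdvd : (x₂:ℤ) ∣ (((v:ℤ) - (x₂:ℤ)) + (h₂:ℤ) - (d:ℤ)) :=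
      (hcop.symm).dvd_of_dvd_mul_left ⟨_, heq2⟩
    obtain ⟨m, hm⟩ := hdvd
    rcases le_or_gt 0 m with hm0 | hm0
    · exact intMem_addmul h0₂ hadd₂ hx₂H hd hm0 (by linear_combination hm)
    · exfalso
      have hca : (c:ℤ) - (a:ℤ) = (x₁:ℤ) * m := by
        refine mul_left_cancel₀ hx₂Z ?_
        linear_combination (x₁:ℤ) * hm - heq2
      exact hf1not (intMem_addmul h0₁ hadd₁ hx₁H hc (m := -m - 1) (by omega)
        (by linear_combination -hca))

include h0₁ hadd₁ h0₂ hadd₂ hx₁H hx₂H hx₁0 hx₂0 hcop hF₁ in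
lemma sym_right_of_symglue
    (hd : ∀ z : ℤ, intMem (glue x₂ H₁ x₁ H₂) z ∨
      intMem (glue x₂ H₁ x₁ H₂) ((x₂:ℤ) * F₁ + (x₁:ℤ) * F₂ + (x₁:ℤ) * (x₂:ℤ) - z)) :
    ∀ w : ℤ, intMem H₂ w ∨ intMem H₂ (F₂ - w) := by
  intro w
  by_cases hw : intMem H₂ w
  · exact Or.inl hw
  right
  have hz := (hd ((x₂:ℤ) * F₁ + (x₁:ℤ) * w + (x₁:ℤ) * (x₂:ℤ))).resolve_left
    (notMem_glue h0₁ hadd₁ h0₂ hadd₂ hx₁H hx₂H hx₂0 hcop hF₁.1 hw)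
  exact extract_right h0₂ hadd₂ hx₂H hx₁0 hcop (intMem_congr hz (by ring))

include h0₁ hadd₁ h0₂ hadd₂ hx₁H hx₂H hx₁0 hx₂0 hcop hF₁ in
lemma sym_right_of_almost
    (hdec₁ : ∃ a b : ℕ, a ∈ H₁ ∧ b ∈ H₁ ∧ a ≠ 0 ∧ b ≠ 0 ∧ x₁ = a + b)
    (hAS : ∀ z : ℤ, ¬ intMem (glue x₂ H₁ x₁ H₂) z →
      ¬ intMem (glue x₂ H₁ x₁ H₂) ((x₂:ℤ) * F₁ + (x₁:ℤ) * F₂ + (x₁:ℤ) * (x₂:ℤ) - z) →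
      z ∈ pseudoFrobenius (glue x₂ H₁ x₁ H₂)) :
    ∀ w : ℤ, intMem H₂ w ∨ intMem H₂ (F₂ - w) := by
  intro w
  by_cases hw : intMem H₂ w
  · exact Or.inl hw
  by_cases hw' : intMem H₂ (F₂ - w)
  · exact Or.inr hw'
  exfalso
  have hz : ¬ intMem (glue x₂ H₁ x₁ H₂) ((x₂:ℤ) * F₁ + (x₁:ℤ) * w + (x₁:ℤ) * (x₂:ℤ)) :=
    notMem_glue h0₁ hadd₁ h0₂ hadd₂ hx₁H hx₂H hx₂0 hcop hF₁.1 hw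
  have hpnot : ¬ intMem (glue x₂ H₁ x₁ H₂) ((x₁:ℤ) * (F₂ - w)) :=
    fun hmem => hw' (extract_right h0₂ hadd₂ hx₂H hx₁0 hcop hmem)
  have hp := hAS _ hpnot (fun hmem => hz (intMem_congr hmem (by ring)))
  obtain ⟨g₁, g₂, heq, ⟨hg₁n, hg₁pf⟩, ⟨hg₂n, hg₂pf⟩⟩ :=
    pf_structure h0₁ hadd₁ h0₂ hadd₂ hx₁H hx₂H hx₁0 hx₂0 hcop hp
  have hx₁Z : (x₁:ℤ) ≠ 0 := by exact_mod_cast hx₁0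
  have hdvd : (x₁:ℤ) ∣ (x₂:ℤ) * g₁ := ⟨F₂ - w - g₂ - x₂, by linear_combination -heq⟩
  obtain ⟨t, ht⟩ := hcop.dvd_of_dvd_mul_left hdvd
  have ht' : F₂ - w = g₂ + (x₂:ℤ) * (t + 1) := by
    refine mul_left_cancel₀ hx₁Z ?_
    linear_combination heq + (x₂:ℤ) * ht
  have ht1 : 0 ≤ t := by
    by_contra hlt
    push_neg at hlt
    have ht0 : t = 0 ∨ t ≤ -1 := by omega
    rcases ht0 with h | h
    · exact hg₁n ⟨0, h0₁, by simp [ht, h]⟩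
    · obtain ⟨a, b, haH, hbH, ha0, hb0, hab⟩ := hdec₁
      have h1 := intMem_nonneg (hg₁pf a haH ha0)
      have h2 : (x₁:ℤ) * t ≤ (x₁:ℤ) * (-1) :=
        mul_le_mul_of_nonneg_left (by omega) (by positivity)
      have hx : (x₁:ℤ) = (a:ℤ) + (b:ℤ) := by exact_mod_cast hab
      have hb1 : (1:ℤ) ≤ (b:ℤ) := by exact_mod_cast Nat.one_le_iff_ne_zero.mpr hb0
      rw [ht] at h1
      linarith
  have hgt0 : t ≠ 0 := by
    intro h
    exact hg₁n ⟨0, h0₁, by simp [ht, h]⟩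
  obtain ⟨c, hc, hcc⟩ := hg₂pf x₂ hx₂H hx₂0
  exact hw' (intMem_addmul h0₂ hadd₂ hx₂H hc (m := t) ht1 (by linear_combination ht' - hcc))

end Main


end NSGG

open NSGG in
theorem almost_symmetric_gluing_tfae (H₁ H₂ : Set ℕ)
    (hH₁ : IsNumericalSemigroup H₁) (hH₂ : IsNumericalSemigroup H₂)
    (x₁ x₂ : ℕ) (hx₁ : x₁ ∈ H₁ \ minGens H₁) (hx₂ : x₂ ∈ H₂ \ minGens H₂)
    (hx₁0 : x₁ ≠ 0) (hx₂0 : x₂ ≠ 0) (hgcd : Nat.gcd x₁ x₂ = 1) :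
    (IsAlmostSymmetricNSG (glue x₂ H₁ x₁ H₂) ↔ IsSymmetricNSG (glue x₂ H₁ x₁ H₂)) ∧
      (IsSymmetricNSG (glue x₂ H₁ x₁ H₂) ↔ IsSymmetricNSG H₁ ∧ IsSymmetricNSG H₂) := by
  classical
  obtain ⟨hx₁H, hx₁nm⟩ := hx₁
  obtain ⟨hx₂H, hx₂nm⟩ := hx₂
  obtain ⟨F₁, hF₁⟩ := exists_frob hH₁
  obtain ⟨F₂, hF₂⟩ := exists_frob hH₂
  obtain ⟨h0₁, hadd₁, -⟩ := hH₁
  obtain ⟨h0₂, hadd₂, -⟩ := hH₂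
  have hcop : IsCoprime (x₁:ℤ) (x₂:ℤ) := Nat.isCoprime_iff_coprime.mpr hgcd
  have hdec₁ : ∃ a b : ℕ, a ∈ H₁ ∧ b ∈ H₁ ∧ a ≠ 0 ∧ b ≠ 0 ∧ x₁ = a + b := by
    by_contra hc
    apply hx₁nm
    refine ⟨⟨hx₁H, by simpa using hx₁0⟩, ?_⟩
    rintro ⟨a, ⟨haH, ha0⟩, b, ⟨hbH, hb0⟩, hab⟩
    exact hc ⟨a, b, haH, hbH, by simpa using ha0, by simpa using hb0, hab⟩
  have hdec₂ : ∃ a b : ℕ, a ∈ H₂ ∧ b ∈ H₂ ∧ a ≠ 0 ∧ b ≠ 0 ∧ x₂ = a + b := by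
    by_contra hc
    apply hx₂nm
    refine ⟨⟨hx₂H, by simpa using hx₂0⟩, ?_⟩
    rintro ⟨a, ⟨haH, ha0⟩, b, ⟨hbH, hb0⟩, hab⟩
    exact hc ⟨a, b, haH, hbH, by simpa using ha0, by simpa using hb0, hab⟩
  have hcomm : glue x₂ H₁ x₁ H₂ = glue x₁ H₂ x₂ H₁ := glue_comm
  have hGF : IsFrobeniusNumber (glue x₂ H₁ x₁ H₂)
      ((x₂:ℤ) * F₁ + (x₁:ℤ) * F₂ + (x₁:ℤ) * (x₂:ℤ)) :=
    ⟨notMem_glue h0₁ hadd₁ h0₂ hadd₂ hx₁H hx₂H hx₂0 hcop hF₁.1 hF₂.1,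
      glue_gt_mem hx₁0 hx₂0 hcop hF₁ hF₂⟩
  -- (3) → (2)
  have h3to2 : (∀ z : ℤ, intMem H₁ z ∨ intMem H₁ (F₁ - z)) →
      (∀ z : ℤ, intMem H₂ z ∨ intMem H₂ (F₂ - z)) →
      IsSymmetricNSG (glue x₂ H₁ x₁ H₂) := fun d₁ d₂ =>
    ⟨_, hGF, sym_glue_of hx₂0 hcop hF₂ d₁ d₂⟩
  -- (2) → (3)
  have h2to3 : IsSymmetricNSG (glue x₂ H₁ x₁ H₂) →
      IsSymmetricNSG H₁ ∧ IsSymmetricNSG H₂ := by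
    rintro ⟨F', hF', hd⟩
    have hFeq : F' = (x₂:ℤ) * F₁ + (x₁:ℤ) * F₂ + (x₁:ℤ) * (x₂:ℤ) := frob_unique hF' hGF
    subst hFeq
    constructor
    · refine ⟨F₁, hF₁, ?_⟩
      have hd' : ∀ z : ℤ, intMem (glue x₁ H₂ x₂ H₁) z ∨
          intMem (glue x₁ H₂ x₂ H₁) ((x₁:ℤ) * F₂ + (x₂:ℤ) * F₁ + (x₂:ℤ) * (x₁:ℤ) - z) := by
        intro z
        rcases hd z with h | h
        · exact Or.inl (hcomm ▸ h)
        · exact Or.inr (hcomm ▸ intMem_congr h (by ring))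
      exact sym_right_of_symglue h0₂ hadd₂ h0₁ hadd₁ hx₂H hx₁H hx₂0 hx₁0 hcop.symm hF₂ hd'
    · exact ⟨F₂, hF₂,
        sym_right_of_symglue h0₁ hadd₁ h0₂ hadd₂ hx₁H hx₂H hx₁0 hx₂0 hcop hF₁ hd⟩
  -- (1) → (3)
  have h1to3 : IsAlmostSymmetricNSG (glue x₂ H₁ x₁ H₂) →
      (∀ z : ℤ, intMem H₁ z ∨ intMem H₁ (F₁ - z)) ∧
      (∀ z : ℤ, intMem H₂ z ∨ intMem H₂ (F₂ - z)) := by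
    rintro ⟨F', hF', hAS⟩
    have hFeq : F' = (x₂:ℤ) * F₁ + (x₁:ℤ) * F₂ + (x₁:ℤ) * (x₂:ℤ) := frob_unique hF' hGF
    subst hFeq
    constructor
    · have hAS' : ∀ z : ℤ, ¬ intMem (glue x₁ H₂ x₂ H₁) z →
          ¬ intMem (glue x₁ H₂ x₂ H₁)
            ((x₁:ℤ) * F₂ + (x₂:ℤ) * F₁ + (x₂:ℤ) * (x₁:ℤ) - z) →
          z ∈ pseudoFrobenius (glue x₁ H₂ x₂ H₁) := by
        intro z h1 h2
        rw [← hcomm] at h1 h2 ⊢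
        exact hAS z h1 (fun hmem => h2 (intMem_congr hmem (by ring)))
      exact sym_right_of_almost h0₂ hadd₂ h0₁ hadd₁ hx₂H hx₁H hx₂0 hx₁0 hcop.symm hF₂
        hdec₂ hAS'
    · exact sym_right_of_almost h0₁ hadd₁ h0₂ hadd₂ hx₁H hx₂H hx₁0 hx₂0 hcop hF₁
        hdec₁ hAS
  refine ⟨⟨fun h => h3to2 (h1to3 h).1 (h1to3 h).2, ?_⟩, h2to3, ?_⟩
  · rintro ⟨F', hF', hd⟩
    exact ⟨F', hF', fun z hz hz' => absurd (hd z) (by tauto)⟩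
  · rintro ⟨⟨Fa, hFa, da⟩, ⟨Fb, hFb, db⟩⟩
    have h1 : Fa = F₁ := frob_unique hFa hF₁
    have h2 : Fb = F₂ := frob_unique hFb hF₂
    subst h1 h2
    exact h3to2 da db
end

section
/- Let H₁ and H₂ be numerical semigroups, let x₁ ∈ H₁ ∖ G(H₁) and x₂ ∈ H₂ ∖ G(H₂) be nonzero with gcd(x₁, x₂) = 1, and let H = x₂·H₁ + x₁·H₂ be their gluing. Then Σ_{w ∈ Ap(H, x₁x₂)} w = x₂² · Σ_{a ∈ Ap(H₁, x₁)} a + x₁² · Σ_{b ∈ Ap(H₂, x₂)} b. -/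
open Set

lemma add_mul_mem {H : Set ℕ} (hH : ∀ a ∈ H, ∀ b ∈ H, a + b ∈ H)
    {a s : ℕ} (ha : a ∈ H) (hs : s ∈ H) : ∀ k : ℕ, a + k * s ∈ H
  | 0 => by simpa using ha
  | (k+1) => by
      have := hH _ (add_mul_mem hH ha hs k) _ hs
      have e : a + (k+1) * s = a + k * s + s := by ring
      rw [e]; exact this

lemma mod_eq_of {x₁ x₂ a u a' v : ℕ} (hgcd : Nat.gcd x₁ x₂ = 1)
    (h : x₂ * a + x₁ * u = x₂ * a' + x₁ * v) : a % x₁ = a' % x₁ := by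
  have key : ∀ w t : ℕ, (w + x₁ * t) % x₁ = w % x₁ := fun w t => by
    rw [mul_comm, Nat.add_mul_mod_self_right]
  have h1 : (x₂ * a) % x₁ = (x₂ * a') % x₁ := by
    rw [← key (x₂ * a) u, h, key]
  exact Nat.ModEq.cancel_left_of_coprime hgcd h1

lemma apery_injOn_mod {H : Set ℕ} (hH : ∀ a ∈ H, ∀ b ∈ H, a + b ∈ H)
    {s : ℕ} (hs : s ∈ H) : Set.InjOn (· % s) (apery H s) := by
  have key : ∀ a b : ℕ, a ∈ apery H s → b ∈ apery H s → a ≤ b → a % s = b % s → a = b := by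
    intro a b ha hb hle hmod
    obtain ⟨k, hk⟩ := (Nat.modEq_iff_dvd' hle).mp hmod
    match k with
    | 0 => omega
    | (k+1) =>
      exfalso
      refine hb.2 ⟨a + k * s, add_mul_mem hH ha.1 hs k, ?_⟩
      have e : s * (k+1) = k * s + s := by ring
      omega
  intro a ha b hb hmod
  rcases le_total a b with h | h
  · exact key a b ha hb h hmod
  · exact (key b a hb ha h hmod.symm).symm

lemma apery_finite {H : Set ℕ} (hH : ∀ a ∈ H, ∀ b ∈ H, a + b ∈ H)
    {s : ℕ} (hs : s ∈ H) (hs0 : s ≠ 0) : (apery H s).Finite := by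
  apply Set.Finite.of_finite_image _ (apery_injOn_mod hH hs)
  apply (Set.finite_Iio s).subset
  rintro _ ⟨a, -, rfl⟩
  exact Nat.mod_lt _ (Nat.pos_of_ne_zero hs0)

lemma apery_surj_mod {H : Set ℕ} (hH : IsNumericalSemigroup H)
    {s : ℕ} (hs0 : s ≠ 0) {r : ℕ} (hr : r < s) : ∃ m ∈ apery H s, m % s = r := by
  classical
  obtain ⟨N, hN⟩ := hH.2.2.bddAbove
  have hbig : ∀ n, N < n → n ∈ H := by
    intro n hn
    by_contra hne
    exact absurd (hN hne) (by omega)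
  have hP : ∃ n, n ∈ H ∧ n % s = r := by
    refine ⟨r + s * (N + 1), hbig _ ?_, ?_⟩
    · have : s * (N+1) ≥ N + 1 := Nat.le_mul_of_pos_left _ (Nat.pos_of_ne_zero hs0)
      omega
    · simp [Nat.add_mul_mod_self_left, Nat.mod_eq_of_lt hr]
  have hm := Nat.find_spec hP
  refine ⟨Nat.find hP, ⟨hm.1, ?_⟩, hm.2⟩
  rintro ⟨b, hb, hbe⟩
  have hbr : b % s = r := by
    have h2 := hm.2
    rw [hbe, Nat.add_mod_right] at h2
    exact h2
  have hlt : b < Nat.find hP := by omega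
  exact Nat.find_min hP hlt ⟨hb, hbr⟩

lemma apery_card {H : Set ℕ} (hH : IsNumericalSemigroup H)
    {s : ℕ} (hs : s ∈ H) (hs0 : s ≠ 0) (hfin : (apery H s).Finite) :
    hfin.toFinset.card = s := by
  have hinj : Set.InjOn (· % s) ↑hfin.toFinset := by
    rw [Set.Finite.coe_toFinset]; exact apery_injOn_mod hH.2.1 hs
  have himg : hfin.toFinset.image (· % s) = Finset.range s := by
    apply Finset.Subset.antisymm
    · intro r hr
      rw [Finset.mem_image] at hr
      obtain ⟨a, _, rfl⟩ := hr
      exact Finset.mem_range.mpr (Nat.mod_lt _ (Nat.pos_of_ne_zero hs0))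
    · intro r hr
      rw [Finset.mem_range] at hr
      obtain ⟨m, hm, hmr⟩ := apery_surj_mod hH hs0 hr
      exact Finset.mem_image.mpr ⟨m, hfin.mem_toFinset.mpr hm, hmr⟩
  calc hfin.toFinset.card = (hfin.toFinset.image (· % s)).card :=
        (Finset.card_image_of_injOn hinj).symm
    _ = s := by rw [himg, Finset.card_range]

section Glue

variable {H₁ H₂ : Set ℕ} {x₁ x₂ : ℕ}

lemma no_shift (hH₁ : ∀ a ∈ H₁, ∀ b ∈ H₁, a + b ∈ H₁) (hH₂ : ∀ a ∈ H₂, ∀ b ∈ H₂, a + b ∈ H₂)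
    (hx₁H : x₁ ∈ H₁) (hx₂H : x₂ ∈ H₂) (hx₁0 : x₁ ≠ 0)
    (hgcd : Nat.gcd x₁ x₂ = 1) {a b a' b' : ℕ}
    (ha : a ∈ apery H₁ x₁) (hb : b ∈ apery H₂ x₂) (ha' : a' ∈ H₁) (hb' : b' ∈ H₂) :
    x₂ * a + x₁ * b ≠ x₂ * a' + x₁ * b' + x₁ * x₂ := by
  intro eq
  have hx1z : (x₁ : ℤ) ≠ 0 := by exact_mod_cast hx₁0
  have eqz : (x₂:ℤ) * a + x₁ * b = x₂ * a' + x₁ * b' + x₁ * x₂ := by exact_mod_cast eq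
  have hmod : a % x₁ = a' % x₁ := by
    apply mod_eq_of hgcd (u := b) (v := b' + x₂)
    rw [mul_add, ← add_assoc]; exact eq
  rcases le_total a a' with h | h
  · obtain ⟨k, hk⟩ := (Nat.modEq_iff_dvd' h).mp hmod
    have hkz : (a' : ℤ) = a + x₁ * k := by omega
    have hb2 : b = (b' + k * x₂) + x₂ := by
      have h' : (x₁:ℤ) * b = x₁ * ((b' + k * x₂) + x₂) := by
        linear_combination eqz + (x₂ : ℤ) * hkz
      exact_mod_cast mul_left_cancel₀ hx1z h'
    exact hb.2 ⟨b' + k * x₂, add_mul_mem hH₂ hb' hx₂H k, hb2⟩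
  · obtain ⟨k, hk⟩ := (Nat.modEq_iff_dvd' h).mp hmod.symm
    match k, hk with
    | 0, hk =>
      have haa : a = a' := by omega
      subst haa
      have hb2 : b = b' + x₂ := by
        have h' : (x₁:ℤ) * b = x₁ * (b' + x₂) := by linear_combination eqz
        exact_mod_cast mul_left_cancel₀ hx1z h'
      exact hb.2 ⟨b', hb', hb2⟩
    | (k+1), hk =>
      refine ha.2 ⟨a' + k * x₁, add_mul_mem hH₁ ha' hx₁H k, ?_⟩
      have e : x₁ * (k+1) = k * x₁ + x₁ := by ring
      omega

lemma glue_inj (hH₁ : ∀ a ∈ H₁, ∀ b ∈ H₁, a + b ∈ H₁)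
    (hx₁H : x₁ ∈ H₁) (hx₁0 : x₁ ≠ 0) (hgcd : Nat.gcd x₁ x₂ = 1) :
    Set.InjOn (fun p : ℕ × ℕ => x₂ * p.1 + x₁ * p.2) (apery H₁ x₁ ×ˢ apery H₂ x₂) := by
  have key : ∀ a b a' b' : ℕ, a ∈ apery H₁ x₁ → a' ∈ apery H₁ x₁ →
      x₂ * a + x₁ * b = x₂ * a' + x₁ * b' → a ≤ a' → a = a' ∧ b = b' := by
    intro a b a' b' ha ha' eq h
    have hmod : a % x₁ = a' % x₁ := mod_eq_of hgcd eq
    obtain ⟨k, hk⟩ := (Nat.modEq_iff_dvd' h).mp hmod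
    match k, hk with
    | 0, hk =>
      have haa : a = a' := by omega
      subst haa
      refine ⟨rfl, ?_⟩
      have : x₁ * b = x₁ * b' := by omega
      exact Nat.eq_of_mul_eq_mul_left (Nat.pos_of_ne_zero hx₁0) this
    | (k+1), hk =>
      exfalso
      refine ha'.2 ⟨a + k * x₁, add_mul_mem hH₁ ha.1 hx₁H k, ?_⟩
      have e : x₁ * (k+1) = k * x₁ + x₁ := by ring
      omega
  rintro ⟨a, b⟩ hab ⟨a', b'⟩ hab' eq
  simp only [Set.mem_prod] at hab hab'
  simp only at eq
  rcases le_total a a' with h | h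
  · obtain ⟨h1, h2⟩ := key a b a' b' hab.1 hab'.1 eq h
    simp [h1, h2]
  · obtain ⟨h1, h2⟩ := key a' b' a b hab'.1 hab.1 eq.symm h
    simp [h1, h2]

lemma apery_glue_eq (hH₁ : ∀ a ∈ H₁, ∀ b ∈ H₁, a + b ∈ H₁)
    (hH₂ : ∀ a ∈ H₂, ∀ b ∈ H₂, a + b ∈ H₂)
    (hx₁H : x₁ ∈ H₁) (hx₂H : x₂ ∈ H₂) (hx₁0 : x₁ ≠ 0)
    (hgcd : Nat.gcd x₁ x₂ = 1) :
    apery (glue x₂ H₁ x₁ H₂) (x₁ * x₂) =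
      (fun p : ℕ × ℕ => x₂ * p.1 + x₁ * p.2) '' (apery H₁ x₁ ×ˢ apery H₂ x₂) := by
  ext w
  constructor
  · rintro ⟨⟨a, ha, b, hb, rfl⟩, hnot⟩
    have haAp : a ∈ apery H₁ x₁ := by
      refine ⟨ha, ?_⟩
      rintro ⟨a₀, ha₀, rfl⟩
      exact hnot ⟨x₂ * a₀ + x₁ * b, ⟨a₀, ha₀, b, hb, rfl⟩, by ring⟩
    have hbAp : b ∈ apery H₂ x₂ := by
      refine ⟨hb, ?_⟩
      rintro ⟨b₀, hb₀, rfl⟩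
      exact hnot ⟨x₂ * a + x₁ * b₀, ⟨a, ha, b₀, hb₀, rfl⟩, by ring⟩
    exact ⟨(a, b), Set.mem_prod.mpr ⟨haAp, hbAp⟩, rfl⟩
  · rintro ⟨⟨a, b⟩, hab, rfl⟩
    simp only [Set.mem_prod] at hab
    obtain ⟨ha, hb⟩ := hab
    refine ⟨⟨a, ha.1, b, hb.1, rfl⟩, ?_⟩
    rintro ⟨c, ⟨a', ha', b', hb', rfl⟩, hce⟩
    exact no_shift hH₁ hH₂ hx₁H hx₂H hx₁0 hgcd ha hb ha' hb' hce

end Glue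

theorem apery_sum_of_gluing (H₁ H₂ : Set ℕ)
    (hH₁ : IsNumericalSemigroup H₁) (hH₂ : IsNumericalSemigroup H₂)
    (x₁ x₂ : ℕ) (hx₁ : x₁ ∈ H₁ \ minGens H₁) (hx₂ : x₂ ∈ H₂ \ minGens H₂)
    (hx₁0 : x₁ ≠ 0) (hx₂0 : x₂ ≠ 0) (hgcd : Nat.gcd x₁ x₂ = 1) :
    ∑ᶠ w ∈ apery (glue x₂ H₁ x₁ H₂) (x₁ * x₂), w =
      x₂ ^ 2 * ∑ᶠ a ∈ apery H₁ x₁, a + x₁ ^ 2 * ∑ᶠ b ∈ apery H₂ x₂, b := by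
  have hx₁H : x₁ ∈ H₁ := hx₁.1
  have hx₂H : x₂ ∈ H₂ := hx₂.1
  have hfin₁ : (apery H₁ x₁).Finite := apery_finite hH₁.2.1 hx₁H hx₁0
  have hfin₂ : (apery H₂ x₂).Finite := apery_finite hH₂.2.1 hx₂H hx₂0
  have hA₁ : hfin₁.toFinset.card = x₁ := apery_card hH₁ hx₁H hx₁0 hfin₁
  have hA₂ : hfin₂.toFinset.card = x₂ := apery_card hH₂ hx₂H hx₂0 hfin₂
  rw [apery_glue_eq hH₁.2.1 hH₂.2.1 hx₁H hx₂H hx₁0 hgcd,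
    finsum_mem_image (glue_inj hH₁.2.1 hx₁H hx₁0 hgcd)]
  have hprod : apery H₁ x₁ ×ˢ apery H₂ x₂ = ↑(hfin₁.toFinset ×ˢ hfin₂.toFinset) := by
    rw [Finset.coe_product, Set.Finite.coe_toFinset, Set.Finite.coe_toFinset]
  have e₁ : ∑ᶠ a ∈ apery H₁ x₁, a = ∑ a ∈ hfin₁.toFinset, a := by
    rw [← finsum_mem_coe_finset, hfin₁.coe_toFinset]
  have e₂ : ∑ᶠ b ∈ apery H₂ x₂, b = ∑ b ∈ hfin₂.toFinset, b := by
    rw [← finsum_mem_coe_finset, hfin₂.coe_toFinset]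
  rw [hprod, finsum_mem_coe_finset, e₁, e₂, Finset.sum_product]
  simp only [Finset.sum_add_distrib, Finset.sum_const, smul_eq_mul, ← Finset.mul_sum]
  rw [hA₁, hA₂, ← Finset.mul_sum, ← Finset.mul_sum]
  ring
end
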